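/- arXiv:1908.00736 — 8 statements merged into one kernel-verified Lean document; each statement's English description precedes it below -/
import Mathlib

section
/- Let N ≥ 1 and let f, g : {1,…,N} × ℕ → ℝ be functions such that Σ_{m∈ℕ} |f(i,m)·g(j,m)| < ∞ for all 1 ≤ i, j ≤ N. Then all the multi-indexed sums below are absolutely summable and Σ_{n∈ℕ^N} det_{1≤i,j≤N}[ f(i, n_j)·g(j, n_j) ] = (1/N!) · Σ_{n∈ℕ^N} det_{1≤i,j≤N}[ f(i, n_j) ] · det_{1≤i,j≤N}[ g(i, n_j) ], where for n = (n_1,…,n_N) ∈ ℕ^N the determinant det_{1≤i,j≤N}[A(i,j)] is that of the N×N real matrix with entry A(i,j) in row i and column j. -/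
open Finset Equiv

set_option maxHeartbeats 1000000


private lemma mul_pi_helper (N : ℕ) (b : ℕ → ℝ) (P : (Fin N → ℕ) → ℝ)
    (hb : Summable fun m => ‖b m‖) (hP : Summable fun n => ‖P n‖) :
    Summable (fun p : ℕ × (Fin N → ℕ) => b p.1 * P p.2) ∧
    (∑' p : ℕ × (Fin N → ℕ), b p.1 * P p.2) = (∑' m, b m) * ∑' n, P n :=
  ⟨summable_norm_iff.mp (hb.mul_norm hP), (tsum_mul_tsum_of_summable_norm hb hP).symm⟩

private lemma mul_pi_helper' (N : ℕ) (b : ℕ → ℝ) (P : (Fin N → ℕ) → ℝ)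
    (hb : Summable b) (hP : Summable P) (hb' : ∀ m, 0 ≤ b m) (hP' : ∀ n, 0 ≤ P n) :
    Summable fun p : ℕ × (Fin N → ℕ) => b p.1 * P p.2 :=
  Summable.mul_of_nonneg hb hP hb' hP'

lemma aux_prod (N : ℕ) (a : Fin N → ℕ → ℝ) (ha : ∀ j, Summable fun m => |a j m|) :
    Summable (fun n : Fin N → ℕ => ∏ j, a j (n j)) ∧
    Summable (fun n : Fin N → ℕ => ∏ j, |a j (n j)|) ∧
    (∑' n : Fin N → ℕ, ∏ j, a j (n j)) = ∏ j, ∑' m, a j m := by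
  induction N with
  | zero =>
    refine ⟨Summable.of_finite, Summable.of_finite, ?_⟩
    simp [tsum_eq_single (default : Fin 0 → ℕ)
      (fun b hb => absurd (Subsingleton.elim b default) hb)]
  | succ N ih =>
    obtain ⟨ih1, ih2, ih3⟩ := ih (fun j => a j.succ) (fun j => ha j.succ)
    set e := Fin.consEquiv (fun _ : Fin (N + 1) => ℕ) with he
    have hcomp : ∀ p : ℕ × (Fin N → ℕ),
        (∏ j, a j (e p j)) = a 0 p.1 * ∏ j : Fin N, a j.succ (p.2 j) := by
      rintro ⟨m, n⟩
      rw [Fin.prod_univ_succ]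
      simp [he, Fin.consEquiv]
    have h0 : Summable (a 0) := summable_abs_iff.mp (ha 0)
    have h0n : Summable fun m : ℕ => ‖a 0 m‖ := by
      simpa [Real.norm_eq_abs] using ha 0
    have h2n : Summable fun n : Fin N → ℕ => ‖∏ j : Fin N, a j.succ (n j)‖ := by
      simpa [Real.norm_eq_abs, abs_prod] using ih2
    have hmain := mul_pi_helper N (a 0) (fun n => ∏ j : Fin N, a j.succ (n j)) h0n h2n
    have hs := hmain.1
    have hcomp2 : ∀ p : ℕ × (Fin N → ℕ),
        (∏ j, |a j (e p j)|) = |a 0 p.1| * ∏ j : Fin N, |a j.succ (p.2 j)| := by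
      rintro ⟨m, n⟩
      rw [Fin.prod_univ_succ]
      simp [he, Fin.consEquiv]
    have habs : Summable fun p : ℕ × (Fin N → ℕ) =>
        |a 0 p.1| * ∏ j : Fin N, |a j.succ (p.2 j)| :=
      mul_pi_helper' N (fun m => |a 0 m|) (fun n => ∏ j : Fin N, |a j.succ (n j)|)
        (ha 0) ih2 (fun m => abs_nonneg _)
        (fun n => Finset.prod_nonneg fun j _ => abs_nonneg _)
    refine ⟨?_, ?_, ?_⟩
    · rw [← Equiv.summable_iff e]
      exact hs.congr fun p => (hcomp p).symm
    · rw [← Equiv.summable_iff e]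
      exact habs.congr fun p => (hcomp2 p).symm
    · rw [← Equiv.tsum_eq e, Fin.prod_univ_succ, ← ih3]
      calc (∑' p : ℕ × (Fin N → ℕ), ∏ j, a j (e p j))
          = ∑' p : ℕ × (Fin N → ℕ), a 0 p.1 * ∏ j : Fin N, a j.succ (p.2 j) := by
            exact tsum_congr hcomp
        _ = (∑' m, a 0 m) * ∑' n : Fin N → ℕ, ∏ j : Fin N, a j.succ (n j) :=
            hmain.2

theorem stmt_0 (N : ℕ) (hN : 1 ≤ N) (f g : Fin N → ℕ → ℝ)
    (hfg : ∀ i j : Fin N, Summable fun m : ℕ => |f i m * g j m|) :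
    (Summable fun n : Fin N → ℕ =>
      |(Matrix.of fun i j : Fin N => f i (n j) * g j (n j)).det|) ∧
    (Summable fun n : Fin N → ℕ =>
      |(Matrix.of fun i j : Fin N => f i (n j)).det *
        (Matrix.of fun i j : Fin N => g i (n j)).det|) ∧
    (∑' n : Fin N → ℕ, (Matrix.of fun i j : Fin N => f i (n j) * g j (n j)).det)
      = (1 / (Nat.factorial N : ℝ)) *
        ∑' n : Fin N → ℕ, (Matrix.of fun i j : Fin N => f i (n j)).det *
          (Matrix.of fun i j : Fin N => g i (n j)).det := by
  classical
  set c : Perm (Fin N) → ℝ := fun σ => ((Perm.sign σ : ℤ) : ℝ) with hc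
  have hcsq : ∀ τ : Perm (Fin N), c τ * c τ = 1 := by
    intro τ
    rcases Int.units_eq_one_or (Perm.sign τ) with h | h <;> simp [hc, h]
  set A : Matrix (Fin N) (Fin N) ℝ := Matrix.of fun i j => ∑' m, f i m * g j m with hA
  -- LHS expansion
  have hLexp : ∀ n : Fin N → ℕ,
      (Matrix.of fun i j : Fin N => f i (n j) * g j (n j)).det
        = ∑ σ : Perm (Fin N), c σ * ∏ j, f (σ j) (n j) * g j (n j) := by
    intro n; rw [Matrix.det_apply']; rfl
  have hL := fun σ : Perm (Fin N) =>
    aux_prod N (fun j m => f (σ j) m * g j m) (fun j => hfg (σ j) j)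
  have hLsum : Summable fun n : Fin N → ℕ =>
      (Matrix.of fun i j : Fin N => f i (n j) * g j (n j)).det := by
    refine Summable.congr ?_ (fun n => (hLexp n).symm)
    exact (hasSum_sum fun σ _ => (((hL σ).1).mul_left (c σ)).hasSum).summable
  -- RHS expansion
  have hRexp : ∀ n : Fin N → ℕ,
      (Matrix.of fun i j : Fin N => f i (n j)).det *
        (Matrix.of fun i j : Fin N => g i (n j)).det
        = ∑ σ : Perm (Fin N), ∑ τ : Perm (Fin N),
            (c σ * c τ) * ∏ j, f (σ j) (n j) * g (τ j) (n j) := by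
    intro n
    rw [Matrix.det_apply', Matrix.det_apply', Finset.sum_mul_sum]
    refine Finset.sum_congr rfl fun σ _ => Finset.sum_congr rfl fun τ _ => ?_
    rw [Finset.prod_mul_distrib]
    simp only [Matrix.of_apply, hc]
    ring
  have hR := fun σ τ : Perm (Fin N) =>
    aux_prod N (fun j m => f (σ j) m * g (τ j) m) (fun j => hfg (σ j) (τ j))
  have hRsum : Summable fun n : Fin N → ℕ =>
      (Matrix.of fun i j : Fin N => f i (n j)).det *
        (Matrix.of fun i j : Fin N => g i (n j)).det := by
    refine Summable.congr ?_ (fun n => (hRexp n).symm)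
    exact (hasSum_sum fun σ _ => (hasSum_sum fun τ _ =>
      (((hR σ τ).1).mul_left (c σ * c τ)).hasSum).summable.hasSum).summable
  refine ⟨summable_abs_iff.mpr hLsum, summable_abs_iff.mpr hRsum, ?_⟩
  -- compute LHS tsum
  have hLt : (∑' n : Fin N → ℕ,
      (Matrix.of fun i j : Fin N => f i (n j) * g j (n j)).det) = A.det := by
    rw [tsum_congr hLexp,
      Summable.tsum_finsetSum (fun σ _ => ((hL σ).1).mul_left (c σ)), Matrix.det_apply']
    refine Finset.sum_congr rfl fun σ _ => ?_
    rw [tsum_mul_left, (hL σ).2.2]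
    rfl
  -- compute RHS tsum
  have hRt : (∑' n : Fin N → ℕ,
      (Matrix.of fun i j : Fin N => f i (n j)).det *
        (Matrix.of fun i j : Fin N => g i (n j)).det)
      = (Nat.factorial N : ℝ) * A.det := by
    rw [tsum_congr hRexp,
      Summable.tsum_finsetSum (fun σ _ => (hasSum_sum fun τ _ =>
        (((hR σ τ).1).mul_left (c σ * c τ)).hasSum).summable)]
    have : ∀ σ : Perm (Fin N),
        (∑' n : Fin N → ℕ, ∑ τ : Perm (Fin N),
          (c σ * c τ) * ∏ j, f (σ j) (n j) * g (τ j) (n j))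
        = ∑ τ : Perm (Fin N), (c σ * c τ) * ∏ j, A (σ j) (τ j) := by
      intro σ
      rw [Summable.tsum_finsetSum (fun τ _ => ((hR σ τ).1).mul_left (c σ * c τ))]
      refine Finset.sum_congr rfl fun τ _ => ?_
      rw [tsum_mul_left, (hR σ τ).2.2]
      rfl
    simp_rw [this]
    rw [Finset.sum_comm]
    have hinner : ∀ τ : Perm (Fin N),
        (∑ σ : Perm (Fin N), (c σ * c τ) * ∏ j, A (σ j) (τ j)) = A.det := by
      intro τ
      have hd : (A.submatrix id τ).det = ∑ σ : Perm (Fin N), c σ * ∏ j, A (σ j) (τ j) := by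
        rw [Matrix.det_apply']; rfl
      have := Matrix.det_permute' τ A
      rw [hd] at this
      calc (∑ σ : Perm (Fin N), (c σ * c τ) * ∏ j, A (σ j) (τ j))
          = c τ * ∑ σ : Perm (Fin N), c σ * ∏ j, A (σ j) (τ j) := by
            rw [Finset.mul_sum]; refine Finset.sum_congr rfl fun σ _ => by ring
        _ = c τ * (c τ * A.det) := by rw [this]
        _ = A.det := by rw [← mul_assoc, hcsq, one_mul]
    simp_rw [hinner]
    rw [Finset.sum_const, Finset.card_univ, Fintype.card_perm, Fintype.card_fin,
      nsmul_eq_mul]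
  rw [hLt, hRt, ← mul_assoc]
  rw [one_div_mul_cancel (by exact_mod_cast Nat.factorial_ne_zero N), one_mul]
end

section
/- Let N ≥ 1, let f, g : {1,…,N} × ℕ → ℝ and h : ℕ → ℝ be functions such that Σ_{m∈ℕ} |h(m)·f(i,m)·g(j,m)| < ∞ for all 1 ≤ i, j ≤ N. Then Σ_{n∈ℕ^N} (∏_{i=1}^N h(n_i)) · det_{1≤i,j≤N}[ f(i, n_j)·g(j, n_j) ] = (1/N!) · Σ_{n∈ℕ^N} (∏_{i=1}^N h(n_i)) · det_{1≤i,j≤N}[ f(i, n_j) ] · det_{1≤i,j≤N}[ g(i, n_j) ], with all multi-indexed sums absolutely summable. -/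
lemma summable_pi_prod : ∀ {k : ℕ} (F : Fin k → ℕ → ℝ), (∀ j, Summable (F j)) →
    (∀ j m, 0 ≤ F j m) → Summable (fun n : Fin k → ℕ => ∏ j, F j (n j)) := by
  intro k
  induction k with
  | zero =>
    intro F _ _
    exact Summable.of_finite
  | succ k ih =>
    intro F hF h0
    have hs : Summable (fun n : Fin k → ℕ => ∏ j : Fin k, F j.succ (n j)) :=
      ih (fun j => F j.succ) (fun j => hF j.succ) (fun j m => h0 j.succ m)
    have hs2 := Summable.mul_of_nonneg (hF 0) hs (fun m => h0 0 m)
        (fun n => Finset.prod_nonneg fun j (_ : j ∈ Finset.univ) => h0 j.succ (n j))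
    have hs3 : Summable ((fun n : Fin (k+1) → ℕ => ∏ j, F j (n j)) ∘
        (Fin.consEquiv (fun _ : Fin (k + 1) => ℕ))) :=
      hs2.congr (fun p => by simp [Fin.consEquiv, Fin.prod_univ_succ])
    exact (Equiv.summable_iff _).mp hs3

def permReindex {N : ℕ} (τ : Equiv.Perm (Fin N)) : (Fin N → ℕ) ≃ (Fin N → ℕ) where
  toFun n := n ∘ τ
  invFun n := n ∘ τ.symm
  left_inv n := by funext i; simp
  right_inv n := by funext i; simp

theorem stmt_1 (N : ℕ) (hN : 1 ≤ N) (f g : Fin N → ℕ → ℝ) (h : ℕ → ℝ)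
    (hfg : ∀ i j : Fin N, Summable fun m : ℕ => |h m * f i m * g j m|) :
    (Summable fun n : Fin N → ℕ =>
      |(∏ i : Fin N, h (n i)) * (Matrix.of fun i j : Fin N => f i (n j) * g j (n j)).det|) ∧
    (Summable fun n : Fin N → ℕ =>
      |(∏ i : Fin N, h (n i)) * ((Matrix.of fun i j : Fin N => f i (n j)).det *
        (Matrix.of fun i j : Fin N => g i (n j)).det)|) ∧
    (∑' n : Fin N → ℕ, (∏ i : Fin N, h (n i)) *
        (Matrix.of fun i j : Fin N => f i (n j) * g j (n j)).det)
      = (1 / (Nat.factorial N : ℝ)) *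
        ∑' n : Fin N → ℕ, (∏ i : Fin N, h (n i)) *
          ((Matrix.of fun i j : Fin N => f i (n j)).det *
            (Matrix.of fun i j : Fin N => g i (n j)).det) := by
  classical
  -- abbreviations
  set A : (Fin N → ℕ) → ℝ := fun n =>
    (∏ i : Fin N, h (n i)) * (Matrix.of fun i j : Fin N => f i (n j) * g j (n j)).det with hA
  set B : (Fin N → ℕ) → ℝ := fun n =>
    (∏ i : Fin N, h (n i)) * ((Matrix.of fun i j : Fin N => f i (n j)).det *
      (Matrix.of fun i j : Fin N => g i (n j)).det) with hB
  have habsgn : ∀ σ : Equiv.Perm (Fin N), |((Equiv.Perm.sign σ : ℤ) : ℝ)| = 1 := by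
    intro σ
    rcases Int.units_eq_one_or (Equiv.Perm.sign σ) with hs | hs <;> norm_num [hs]
  have hsq : ∀ σ : Equiv.Perm (Fin N),
      ((Equiv.Perm.sign σ : ℤ) : ℝ) * ((Equiv.Perm.sign σ : ℤ) : ℝ) = 1 := by
    intro σ
    rcases Int.units_eq_one_or (Equiv.Perm.sign σ) with hs | hs <;> norm_num [hs]
  -- step 1: summability of |A|
  have hD1 : Summable (fun n : Fin N → ℕ => ∑ σ : Equiv.Perm (Fin N),
      ∏ j : Fin N, |h (n j) * f (σ j) (n j) * g j (n j)|) := by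
    apply summable_sum
    intro σ _
    exact summable_pi_prod (fun j m => |h m * f (σ j) m * g j m|)
      (fun j => hfg (σ j) j) (fun j m => abs_nonneg _)
  have hbound1 : ∀ n : Fin N → ℕ, |A n| ≤ ∑ σ : Equiv.Perm (Fin N),
      ∏ j : Fin N, |h (n j) * f (σ j) (n j) * g j (n j)| := by
    intro n
    rw [hA]
    simp only [Matrix.det_apply', Matrix.of_apply, Finset.mul_sum]
    refine le_trans (Finset.abs_sum_le_sum_abs _ _) (le_of_eq ?_)
    refine Finset.sum_congr rfl fun σ _ => ?_
    rw [← Finset.abs_prod]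
    have : (∏ i : Fin N, h (n i)) * (((Equiv.Perm.sign σ : ℤ) : ℝ) *
        ∏ i : Fin N, f (σ i) (n i) * g i (n i))
        = ((Equiv.Perm.sign σ : ℤ) : ℝ) * ∏ j : Fin N, h (n j) * f (σ j) (n j) * g j (n j) := by
      rw [show (∏ j : Fin N, h (n j) * f (σ j) (n j) * g j (n j))
          = ((∏ j : Fin N, h (n j)) * ∏ j : Fin N, f (σ j) (n j)) * ∏ j : Fin N, g j (n j) by
        rw [Finset.prod_mul_distrib, Finset.prod_mul_distrib]]
      rw [Finset.prod_mul_distrib]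
      ring
    rw [this, abs_mul, habsgn, one_mul]
  have hAabs : Summable fun n : Fin N → ℕ => |A n| :=
    Summable.of_nonneg_of_le (fun n => abs_nonneg _) hbound1 hD1
  have hAsum : Summable A := hAabs.of_abs
  -- the det with fg columns factors
  have detfg : ∀ n : Fin N → ℕ, (Matrix.of fun i j : Fin N => f i (n j) * g j (n j)).det
      = (∏ j : Fin N, g j (n j)) * (Matrix.of fun i j : Fin N => f i (n j)).det := by
    intro n
    have : (Matrix.of fun i j : Fin N => f i (n j) * g j (n j))
        = Matrix.of (fun i j : Fin N =>
            (fun j => g j (n j)) j * (Matrix.of fun i j : Fin N => f i (n j)) i j) := by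
      ext i j
      simp [mul_comm]
    rw [this, Matrix.det_mul_row]
  -- permutation-twisted summands
  set C : Equiv.Perm (Fin N) → (Fin N → ℕ) → ℝ := fun τ n =>
    ((Equiv.Perm.sign τ : ℤ) : ℝ) * ((∏ i : Fin N, h (n i)) *
      ((Matrix.of fun i j : Fin N => f i (n j)).det * ∏ j : Fin N, g (τ j) (n j))) with hC
  have key1 : ∀ (τ : Equiv.Perm (Fin N)) (n : Fin N → ℕ), C τ (permReindex τ n) = A n := by
    intro τ n
    have h1 : ∏ i : Fin N, h (n (τ i)) = ∏ i : Fin N, h (n i) :=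
      Equiv.prod_comp τ (fun i => h (n i))
    have h2 : ∏ j : Fin N, g (τ j) (n (τ j)) = ∏ j : Fin N, g j (n j) :=
      Equiv.prod_comp τ (fun j => g j (n j))
    have hsub : (Matrix.of fun i j : Fin N => f i (n j)).submatrix id τ
        = Matrix.of fun i j : Fin N => f i (n (τ j)) := by
      ext i j
      simp
    have h3 : (Matrix.of fun i j : Fin N => f i (n (τ j))).det
        = ((Equiv.Perm.sign τ : ℤ) : ℝ) * (Matrix.of fun i j : Fin N => f i (n j)).det := by
      rw [← hsub, Matrix.det_permute']
    have hstep : C τ (permReindex τ n) = ((Equiv.Perm.sign τ : ℤ) : ℝ) *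
        ((∏ i : Fin N, h (n (τ i))) *
        ((Matrix.of fun i j : Fin N => f i (n (τ j))).det *
          ∏ j : Fin N, g (τ j) (n (τ j)))) := by
      simp only [hC, permReindex, Equiv.coe_fn_mk, Function.comp_apply]
    rw [hstep, h1, h2, h3, hA]
    simp only []
    rw [detfg n]
    linear_combination ((∏ i : Fin N, h (n i)) *
      (Matrix.of fun i j : Fin N => f i (n j)).det * (∏ j : Fin N, g j (n j))) * hsq τ
  have key2 : ∀ n : Fin N → ℕ, B n = ∑ τ : Equiv.Perm (Fin N), C τ n := by
    intro n
    rw [hB]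
    simp only [hC]
    rw [Matrix.det_apply' (Matrix.of fun i j : Fin N => g i (n j))]
    simp only [Matrix.of_apply, Finset.mul_sum]
    refine Finset.sum_congr rfl fun τ _ => ?_
    ring
  have hCsum : ∀ τ : Equiv.Perm (Fin N), Summable (C τ) := by
    intro τ
    refine (Equiv.summable_iff (permReindex τ)).mp ?_
    exact hAsum.congr fun n => (key1 τ n).symm
  have hCabs : ∀ τ : Equiv.Perm (Fin N), Summable fun n => |C τ n| := by
    intro τ
    refine (Equiv.summable_iff (permReindex τ)).mp ?_
    exact hAabs.congr fun n => by rw [Function.comp_apply, key1 τ n]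
  -- step 2: summability of |B|
  have hBabs : Summable fun n : Fin N → ℕ => |B n| := by
    have hDB : Summable (fun n : Fin N → ℕ => ∑ τ : Equiv.Perm (Fin N), |C τ n|) :=
      summable_sum fun τ _ => hCabs τ
    refine Summable.of_nonneg_of_le (fun n => abs_nonneg _) (fun n => ?_) hDB
    rw [key2]
    exact Finset.abs_sum_le_sum_abs _ _
  refine ⟨hAabs, hBabs, ?_⟩
  -- the identity
  have hT2 : ∑' n, B n = (N.factorial : ℝ) * ∑' n, A n := by
    calc ∑' n, B n = ∑' n, ∑ τ : Equiv.Perm (Fin N), C τ n := tsum_congr key2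
      _ = ∑ τ : Equiv.Perm (Fin N), ∑' n, C τ n := Summable.tsum_finsetSum fun τ _ => hCsum τ
      _ = ∑ τ : Equiv.Perm (Fin N), ∑' n, A n := by
          refine Finset.sum_congr rfl fun τ _ => ?_
          rw [← Equiv.tsum_eq (permReindex τ) (C τ)]
          exact tsum_congr (key1 τ)
      _ = (N.factorial : ℝ) * ∑' n, A n := by
          rw [Finset.sum_const, Finset.card_univ, Fintype.card_perm, Fintype.card_fin,
            nsmul_eq_mul]
  rw [hT2]
  have hfac : (N.factorial : ℝ) ≠ 0 := Nat.cast_ne_zero.mpr (Nat.factorial_ne_zero N)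
  field_simp
end

section
/- Let N ≥ 1, let f : ℝ → ℝ be infinitely differentiable, let a ∈ ℝ and let y_1, …, y_N ∈ ℝ be fixed. Then, as x = (x_1,…,x_N) tends to (a,…,a) through tuples with pairwise distinct coordinates, the ratio det_{1≤i,j≤N}[ f(x_i · y_j) ] / det_{1≤i,j≤N}[ (x_i − a)^{N−j} ] converges to det_{1≤i,j≤N}[ y_i^{N−j} · f^{(N−j)}(a·y_i) / (N−j)! ], where f^{(m)} denotes the m-th derivative of f. (For pairwise distinct x_i the denominator det_{1≤i,j≤N}[(x_i − a)^{N−j}] is a nonzero Vandermonde determinant.) -/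
open Finset Polynomial intervalIntegral MeasureTheory

noncomputable def DD : (n : ℕ) → (ℝ → ℝ) → (Fin (n+1) → ℝ) → ℝ
  | 0, f, x => f (x 0)
  | (n+1), f, x => ∫ t in (0:ℝ)..1,
      t ^ n * DD n (deriv f) (fun i => (1 - t) * x 0 + t * x i.succ)

lemma DD_continuous (n : ℕ) (f : ℝ → ℝ) (hf : ContDiff ℝ (⊤:ℕ∞) f) :
    Continuous fun x : Fin (n+1) → ℝ => DD n f x := by
  induction n generalizing f with
  | zero => exact hf.continuous.comp (continuous_apply 0)
  | succ n ih =>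
    have hd : ContDiff ℝ (⊤:ℕ∞) (deriv f) := (contDiff_infty_iff_deriv.mp hf).2
    have hih := ih (deriv f) hd
    show Continuous fun x : Fin (n+2) → ℝ => ∫ t in (0:ℝ)..1,
      t ^ n * DD n (deriv f) (fun i => (1 - t) * x 0 + t * x i.succ)
    apply intervalIntegral.continuous_parametric_intervalIntegral_of_continuous'
    apply Continuous.mul
    · exact (continuous_snd.pow n)
    · apply hih.comp
      apply continuous_pi
      intro i
      fun_prop

lemma DD_const (n : ℕ) (f : ℝ → ℝ) (a : ℝ) :
    DD n f (fun _ => a) = iteratedDeriv n f a / n.factorial := by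
  induction n generalizing f with
  | zero => simp [DD]
  | succ n ih =>
    show (∫ t in (0:ℝ)..1, t ^ n * DD n (deriv f) (fun i => (1-t)*a + t*a)) = _
    have : ∀ t : ℝ, (fun _ : Fin (n+1) => (1-t)*a + t*a) = fun _ => a := by
      intro t; funext i; ring
    simp_rw [this, ih (deriv f)]
    rw [intervalIntegral.integral_mul_const, integral_pow]
    rw [iteratedDeriv_succ', Nat.factorial_succ]
    push_cast
    field_simp
    simp

lemma prod_erase_eq {n : ℕ} (k : Fin n) (g : Fin n → ℝ) :
    ∏ l ∈ univ.erase k, g l = ∏ l, if l = k then 1 else g l := by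
  rw [← Finset.mul_prod_erase univ _ (mem_univ k), if_pos rfl, one_mul]
  exact (Finset.prod_congr rfl fun l hl => if_neg (mem_erase.mp hl).1).symm

lemma L1 (m d : ℕ) (hd : d ≤ m) (x : Fin (m+1) → ℝ) (hx : Function.Injective x) :
    ∑ k : Fin (m+1), (x k)^d * (∏ l ∈ univ.erase k, (x k - x l))⁻¹
      = if d = m then 1 else 0 := by
  have hinj : Set.InjOn x (univ : Finset (Fin (m+1))) := fun a _ b _ h => hx h
  have hcard : #(univ : Finset (Fin (m+1))) = m + 1 := by simp
  have hdeg : (X ^ d : ℝ[X]).degree < #(univ : Finset (Fin (m+1))) := by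
    rw [hcard, degree_X_pow]
    exact_mod_cast Nat.lt_succ_of_le hd
  have hinterp := Lagrange.eq_interpolate hinj hdeg
  have hco := congrArg (fun p => Polynomial.coeff p m) hinterp
  simp only [Lagrange.interpolate_apply, Polynomial.finset_sum_coeff, coeff_C_mul,
    coeff_X_pow] at hco
  have hbasis : ∀ k : Fin (m+1), (Lagrange.basis univ x k).coeff m
      = (∏ l ∈ univ.erase k, (x k - x l))⁻¹ := by
    intro k
    have hnd : (Lagrange.basis univ x k).natDegree = m := by
      simp [Lagrange.natDegree_basis hinj (mem_univ k), hcard]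
    have hl := Polynomial.coeff_natDegree (p := Lagrange.basis univ x k)
    rw [hnd] at hl
    rw [hl, Lagrange.basis, leadingCoeff_prod]
    rw [← Finset.prod_inv_distrib]
    apply Finset.prod_congr rfl
    intro l hl
    have hne : x k ≠ x l := fun h => (mem_erase.mp hl).1.symm (hx h)
    rw [Lagrange.basisDivisor, leadingCoeff_mul, leadingCoeff_C,
      (monic_X_sub_C (x l)).leadingCoeff, mul_one]
  simp only [hbasis, eval_pow, eval_X] at hco
  rw [← hco]
  simp [eq_comm]

lemma integral_line (f : ℝ → ℝ) (hf : ContDiff ℝ (⊤:ℕ∞) f) (c d : ℝ) (hcd : c ≠ d) :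
    ∫ t in (0:ℝ)..1, deriv f ((1-t)*c + t*d) = (f d - f c) / (d - c) := by
  have h1 : ∀ t : ℝ, (1-t)*c + t*d = c + t*(d-c) := fun t => by ring
  simp only [h1]
  have hder : ∀ t ∈ Set.uIcc (0:ℝ) 1, HasDerivAt (fun t => c + t*(d-c)) (d-c) t := by
    intro t _
    simpa [mul_comm] using ((hasDerivAt_id t).const_mul (d-c)).const_add c
  have hcg : Continuous (deriv f) := ((contDiff_infty_iff_deriv.mp hf).2).continuous
  have key := intervalIntegral.integral_comp_smul_deriv hder (by fun_prop) hcg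
  simp only [smul_eq_mul, Function.comp_def] at key
  have hne : d - c ≠ 0 := sub_ne_zero.mpr (Ne.symm hcd)
  have : ∫ t in (0:ℝ)..1, (d-c) * deriv f (c + t*(d-c)) = f d - f c := by
    rw [key]
    rw [show c + 0 * (d-c) = c by ring, show c + 1 * (d - c) = d by ring]
    exact intervalIntegral.integral_deriv_eq_sub
      (fun t _ => (contDiff_infty_iff_deriv.mp hf).1 t)
      (hcg.intervalIntegrable _ _)
  rw [intervalIntegral.integral_const_mul] at this
  field_simp at this ⊢
  linarith [this]

lemma DD_eq_sum (n : ℕ) (f : ℝ → ℝ) (hf : ContDiff ℝ (⊤:ℕ∞) f)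
    (x : Fin (n+1) → ℝ) (hx : Function.Injective x) :
    DD n f x = ∑ k, f (x k) * (∏ l ∈ univ.erase k, (x k - x l))⁻¹ := by
  induction n generalizing f with
  | zero =>
    simp [DD, Subsingleton.elim (α := Fin 1) _ 0]
  | succ n ih =>
    have hd : ContDiff ℝ (⊤:ℕ∞) (deriv f) := (contDiff_infty_iff_deriv.mp hf).2
    have hdc : Continuous (deriv f) := hd.continuous
    have hPne : ∀ k : Fin (n+1),
        (∏ l ∈ univ.erase k, (x k.succ - x l.succ)) ≠ 0 := by
      intro k
      apply Finset.prod_ne_zero_iff.mpr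
      intro l hl
      refine sub_ne_zero.mpr fun h => (mem_erase.mp hl).1.symm ?_
      exact Fin.succ_injective _ (hx h)
    -- step 1: integrand equality on Ioc 0 1
    have key : ∀ t ∈ Set.Ioc (0:ℝ) 1,
        t ^ n * DD n (deriv f) (fun i => (1 - t) * x 0 + t * x i.succ)
          = ∑ k : Fin (n+1), deriv f ((1 - t) * x 0 + t * x k.succ)
              * (∏ l ∈ univ.erase k, (x k.succ - x l.succ))⁻¹ := by
      intro t ht
      have ht0 : t ≠ 0 := ne_of_gt ht.1
      have hw : Function.Injective (fun i : Fin (n+1) => (1 - t) * x 0 + t * x i.succ) := by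
        intro i j hij
        simp only [add_right_inj] at hij
        exact Fin.succ_injective _ (hx (mul_left_cancel₀ ht0 hij))
      rw [ih (deriv f) hd _ hw, Finset.mul_sum]
      apply Finset.sum_congr rfl
      intro k _
      have hprod : ∏ l ∈ univ.erase k,
            (((1 - t) * x 0 + t * x k.succ) - ((1 - t) * x 0 + t * x l.succ))
          = t ^ n * ∏ l ∈ univ.erase k, (x k.succ - x l.succ) := by
        have h2 : ∀ l : Fin (n+1), ((1 - t) * x 0 + t * x k.succ) - ((1 - t) * x 0 + t * x l.succ)
            = t * (x k.succ - x l.succ) := fun l => by ring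
        simp_rw [h2]
        rw [Finset.prod_mul_distrib, Finset.prod_const, card_erase_of_mem (mem_univ k)]
        simp
      rw [hprod]
      have htn : t ^ n ≠ 0 := pow_ne_zero _ ht0
      rw [mul_inv]
      calc t ^ n * (deriv f ((1 - t) * x 0 + t * x k.succ)
              * ((t ^ n)⁻¹ * (∏ l ∈ univ.erase k, (x k.succ - x l.succ))⁻¹))
          = (t ^ n * (t ^ n)⁻¹) * (deriv f ((1 - t) * x 0 + t * x k.succ)
              * (∏ l ∈ univ.erase k, (x k.succ - x l.succ))⁻¹) := by ring
        _ = _ := by rw [mul_inv_cancel₀ htn, one_mul]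
    -- step 2: rewrite the integral
    have hint : DD (n+1) f x
        = ∫ t in (0:ℝ)..1, ∑ k : Fin (n+1), deriv f ((1 - t) * x 0 + t * x k.succ)
            * (∏ l ∈ univ.erase k, (x k.succ - x l.succ))⁻¹ := by
      show (∫ t in (0:ℝ)..1, t ^ n * DD n (deriv f) (fun i => (1 - t) * x 0 + t * x i.succ)) = _
      apply intervalIntegral.integral_congr_ae
      apply MeasureTheory.ae_of_all
      intro t ht
      rw [Set.uIoc_of_le (by norm_num : (0:ℝ) ≤ 1)] at ht
      exact key t ht
    rw [hint, intervalIntegral.integral_finset_sum]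
    swap
    · intro k _
      apply Continuous.intervalIntegrable
      fun_prop
    -- step 3: FTC for each term
    have hxk : ∀ k : Fin (n+1), x 0 ≠ x k.succ := by
      intro k h
      exact (Fin.succ_ne_zero k).symm (hx h)
    have hsum : ∀ k : Fin (n+1),
        (∫ t in (0:ℝ)..1, deriv f ((1 - t) * x 0 + t * x k.succ)
            * (∏ l ∈ univ.erase k, (x k.succ - x l.succ))⁻¹)
          = (f (x k.succ) - f (x 0)) / (x k.succ - x 0)
            * (∏ l ∈ univ.erase k, (x k.succ - x l.succ))⁻¹ := by
      intro k
      rw [intervalIntegral.integral_mul_const, integral_line f hf _ _ (hxk k)]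
    simp_rw [hsum]
    -- step 4: algebra
    have hQs : ∀ k : Fin (n+1),
        (∏ l ∈ (univ : Finset (Fin (n+2))).erase k.succ, (x k.succ - x l))
          = (x k.succ - x 0) * ∏ l ∈ univ.erase k, (x k.succ - x l.succ) := by
      intro k
      rw [prod_erase_eq, Fin.prod_univ_succ, if_neg (Fin.succ_ne_zero k).symm]
      congr 1
      rw [prod_erase_eq]
      exact Finset.prod_congr rfl fun l _ => by simp [Fin.succ_inj]
    have hL1 := L1 (n+1) 0 (Nat.zero_le _) x hx
    simp only [pow_zero, one_mul, if_neg (Nat.zero_ne_add_one n)] at hL1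
    rw [Fin.sum_univ_succ] at hL1
    have hQ0 : (∏ l ∈ (univ : Finset (Fin (n+2))).erase 0, (x 0 - x l))⁻¹
        = - ∑ k : Fin (n+1), (∏ l ∈ (univ : Finset (Fin (n+2))).erase k.succ, (x k.succ - x l))⁻¹ :=
      eq_neg_of_add_eq_zero_left hL1
    have hterm : ∀ k : Fin (n+1),
        (f (x k.succ) - f (x 0)) / (x k.succ - x 0)
            * (∏ l ∈ univ.erase k, (x k.succ - x l.succ))⁻¹
          = f (x k.succ) * (∏ l ∈ (univ : Finset (Fin (n+2))).erase k.succ, (x k.succ - x l))⁻¹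
            - f (x 0) * (∏ l ∈ (univ : Finset (Fin (n+2))).erase k.succ, (x k.succ - x l))⁻¹ := by
      intro k
      rw [hQs k, mul_inv]
      have hd0 : x k.succ - x 0 ≠ 0 := sub_ne_zero.mpr (Ne.symm (hxk k))
      field_simp
    simp_rw [hterm]
    rw [Finset.sum_sub_distrib, ← Finset.mul_sum]
    conv_rhs => rw [Fin.sum_univ_succ]
    rw [hQ0]
    ring

lemma DD_monomial (n d : ℕ) (hd : d ≤ n) (a : ℝ) (x : Fin (n+1) → ℝ)
    (hx : Function.Injective x) :
    DD n (fun t => (t - a)^d) x = if d = n then 1 else 0 := by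
  have hsmooth : ContDiff ℝ (⊤:ℕ∞) (fun t : ℝ => (t - a)^d) :=
    (contDiff_id.sub contDiff_const).pow d
  rw [DD_eq_sum n _ hsmooth x hx]
  have hz : Function.Injective (fun k => x k - a) := by
    intro i j h
    simp only [sub_left_inj] at h
    exact hx h
  have := L1 n d hd (fun k => x k - a) hz
  simp only [sub_sub_sub_cancel_right] at this
  exact this

lemma map_castLE_univ {N : ℕ} (i : Fin N) :
    (univ : Finset (Fin ((i:ℕ)+1))).map (Fin.castLEEmb i.isLt) = Iic i := by
  ext k
  simp only [Finset.mem_map, Finset.mem_univ, true_and, Finset.mem_Iic]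
  constructor
  · rintro ⟨k', rfl⟩
    rw [Fin.le_def]
    simpa using Nat.lt_succ_iff.mp k'.isLt
  · intro hk
    have hk' : (k:ℕ) < (i:ℕ) + 1 := Nat.lt_succ_of_le (Fin.le_def.mp hk)
    exact ⟨⟨(k:ℕ), hk'⟩, by ext; simp⟩

lemma det_factor {N : ℕ} (x : Fin N → ℝ) (hx : Function.Injective x)
    (g : Fin N → ℝ → ℝ) (hg : ∀ j, ContDiff ℝ (⊤:ℕ∞) (g j)) :
    (Matrix.of fun i j => g j (x i)).det
      = (∏ i, ∏ l ∈ Iio i, (x i - x l)) *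
        (Matrix.of fun i j : Fin N =>
          DD i (g j) (fun k : Fin ((i:ℕ)+1) => x (Fin.castLE i.isLt k))).det := by
  classical
  set L : Matrix (Fin N) (Fin N) ℝ := Matrix.of fun i k =>
    if k ≤ i then (∏ l ∈ (Iic i).erase k, (x k - x l))⁻¹ else 0 with hL
  have hVne : (∏ i, ∏ l ∈ Iio i, (x i - x l)) ≠ 0 := by
    apply Finset.prod_ne_zero_iff.mpr
    intro i _
    apply Finset.prod_ne_zero_iff.mpr
    intro l hl
    have hli : l < i := Finset.mem_Iio.mp hl
    exact sub_ne_zero.mpr fun h => absurd (hx h) (ne_of_gt hli)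
  have hmul : (Matrix.of fun i j : Fin N =>
      DD i (g j) (fun k : Fin ((i:ℕ)+1) => x (Fin.castLE i.isLt k)))
      = L * (Matrix.of fun i j => g j (x i)) := by
    ext i j
    rw [Matrix.mul_apply]
    simp only [Matrix.of_apply, hL, ite_mul, zero_mul]
    rw [← Finset.sum_filter]
    have hfilter : (univ : Finset (Fin N)).filter (fun k => k ≤ i) = Iic i := by
      ext k; simp
    rw [hfilter, ← map_castLE_univ i, Finset.sum_map]
    rw [show (DD (↑i) (g j) fun k => x (Fin.castLE i.isLt k))
        = ∑ k', (g j) (x (Fin.castLE i.isLt k'))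
            * (∏ l' ∈ univ.erase k', (x (Fin.castLE i.isLt k') - x (Fin.castLE i.isLt l')))⁻¹
      from DD_eq_sum i (g j) (hg j) _ (hx.comp (Fin.castLEEmb i.isLt).injective)]
    apply Finset.sum_congr rfl
    intro k' _
    rw [mul_comm]
    congr 1
    rw [← Finset.map_erase, Finset.prod_map]
    rfl
  have htri : L.BlockTriangular OrderDual.toDual := by
    intro p q hpq
    simp only [hL, Matrix.of_apply]
    exact if_neg (not_le.mpr hpq)
  have hdetL : L.det = (∏ i, ∏ l ∈ Iio i, (x i - x l))⁻¹ := by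
    rw [Matrix.det_of_lowerTriangular L htri, ← Finset.prod_inv_distrib]
    apply Finset.prod_congr rfl
    intro i _
    simp only [hL, Matrix.of_apply, if_pos le_rfl]
    rw [Finset.Iic_erase]
  rw [hmul, Matrix.det_mul, hdetL, ← mul_assoc, mul_inv_cancel₀ hVne, one_mul]

open Filter

theorem stmt_2 (N : ℕ) (hN : 1 ≤ N) (f : ℝ → ℝ) (hf : ContDiff ℝ (⊤ : ℕ∞) f)
    (a : ℝ) (y : Fin N → ℝ) :
    Filter.Tendsto
      (fun x : Fin N → ℝ =>
        (Matrix.of fun i j : Fin N => f (x i * y j)).det /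
          (Matrix.of fun i j : Fin N => (x i - a) ^ (N - 1 - (j : ℕ))).det)
      (nhdsWithin (fun _ => a)
        ({x : Fin N → ℝ | Function.Injective x} \ {fun _ => a}))
      (nhds ((Matrix.of fun i j : Fin N =>
        y i ^ (N - 1 - (j : ℕ)) * iteratedDeriv (N - 1 - (j : ℕ)) f (a * y i) /
          (Nat.factorial (N - 1 - (j : ℕ)))).det)) := by
  classical
  have hf' : ContDiff ℝ (⊤:ℕ∞) f := hf.of_le (by simp)
  set ρ : Equiv.Perm (Fin N) := Fin.revPerm with hρ
  set s : ℝ := ((Equiv.Perm.sign ρ : ℤ) : ℝ) with hs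
  have hs2 : s * s = 1 := by
    rw [hs]
    norm_cast
    rw [Int.units_mul_self]
    rfl
  have hsne : s ≠ 0 := fun h => by simp [h] at hs2
  have hsinv : s⁻¹ = s := by
    field_simp
    nlinarith [hs2]
  -- the numerator DD matrix
  set G : Fin N → ℝ → ℝ := fun j t => f (t * y j) with hG
  have hGsmooth : ∀ j, ContDiff ℝ (⊤:ℕ∞) (G j) :=
    fun j => hf'.comp (contDiff_id.mul contDiff_const)
  set DDnum : (Fin N → ℝ) → Matrix (Fin N) (Fin N) ℝ := fun x =>
    Matrix.of fun i j : Fin N =>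
      DD i (G j) (fun k : Fin ((i:ℕ)+1) => x (Fin.castLE i.isLt k)) with hDDnum
  -- denominator determinant
  have hrev : ∀ q : Fin N, N - 1 - ((Fin.rev q : Fin N) : ℕ) = (q:ℕ) := by
    intro q
    rw [Fin.val_rev]
    omega
  have hden : ∀ x : Fin N → ℝ, Function.Injective x →
      (Matrix.of fun i j : Fin N => (x i - a) ^ (N - 1 - (j : ℕ))).det
        = (∏ i, ∏ l ∈ Finset.Iio i, (x i - x l)) * s := by
    intro x hx
    rw [det_factor x hx (fun j t => (t - a) ^ (N - 1 - (j:ℕ)))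
      (fun j => (contDiff_id.sub contDiff_const).pow _)]
    congr 1
    -- show the DD-matrix has determinant s
    set B : Matrix (Fin N) (Fin N) ℝ := Matrix.of fun i j : Fin N =>
      DD i (fun t => (t - a) ^ (N - 1 - (j:ℕ)))
        (fun k : Fin ((i:ℕ)+1) => x (Fin.castLE i.isLt k)) with hB
    have hxres : ∀ i : Fin N,
        Function.Injective (fun k : Fin ((i:ℕ)+1) => x (Fin.castLE i.isLt k)) :=
      fun i => hx.comp (Fin.castLEEmb i.isLt).injective
    have hUentry : ∀ p q : Fin N, (q:ℕ) ≤ (p:ℕ) →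
        B p (ρ q) = if (q:ℕ) = (p:ℕ) then 1 else 0 := by
      intro p q hqp
      show DD p (fun t => (t - a) ^ (N - 1 - ((ρ q : Fin N):ℕ))) _ = _
      have : N - 1 - ((ρ q : Fin N) : ℕ) = (q:ℕ) := hrev q
      rw [this]
      exact DD_monomial p q hqp a _ (hxres p)
    have htri : (B.submatrix id ρ).BlockTriangular id := by
      intro p q hpq
      show B p (ρ q) = 0
      have hlt : (q:ℕ) < (p:ℕ) := hpq
      rw [hUentry p q (le_of_lt hlt), if_neg (Nat.ne_of_lt hlt)]
    have hdiag : ∀ p : Fin N, (B.submatrix id ρ) p p = 1 := by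
      intro p
      show B p (ρ p) = 1
      rw [hUentry p p le_rfl, if_pos rfl]
    have hdetU : (B.submatrix id ρ).det = 1 := by
      rw [Matrix.det_of_upperTriangular htri]
      exact Finset.prod_eq_one fun p _ => hdiag p
    have := Matrix.det_permute' ρ B
    rw [hdetU] at this
    -- 1 = sign ρ * det B
    have : s * B.det = 1 := by
      rw [hs]
      exact_mod_cast this.symm
    calc B.det = s * (s * B.det) := by rw [← mul_assoc, hs2, one_mul]
      _ = s := by rw [this, mul_one]
  -- numerator factorization
  have hnum : ∀ x : Fin N → ℝ, Function.Injective x →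
      (Matrix.of fun i j : Fin N => f (x i * y j)).det
        = (∏ i, ∏ l ∈ Finset.Iio i, (x i - x l)) * (DDnum x).det := by
    intro x hx
    exact det_factor x hx G hGsmooth
  -- the ratio equals DDnum det / s on the relevant set
  have hratio : ∀ x : Fin N → ℝ, Function.Injective x →
      (Matrix.of fun i j : Fin N => f (x i * y j)).det /
          (Matrix.of fun i j : Fin N => (x i - a) ^ (N - 1 - (j : ℕ))).det
        = (DDnum x).det / s := by
    intro x hx
    rw [hnum x hx, hden x hx]
    have hVne : (∏ i, ∏ l ∈ Finset.Iio i, (x i - x l)) ≠ 0 := by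
      apply Finset.prod_ne_zero_iff.mpr
      intro i _
      apply Finset.prod_ne_zero_iff.mpr
      intro l hl
      have hli : l < i := Finset.mem_Iio.mp hl
      exact sub_ne_zero.mpr fun h => absurd (hx h) (ne_of_gt hli)
    rw [mul_div_mul_left _ _ hVne]
  -- continuity of DDnum det
  have hcont : Continuous fun x : Fin N → ℝ => (DDnum x).det := by
    apply Continuous.matrix_det
    apply continuous_matrix
    intro i j
    exact (DD_continuous i (G j) (hGsmooth j)).comp
      (continuous_pi fun k => continuous_apply _)
  -- value at the constant point
  set M : Matrix (Fin N) (Fin N) ℝ := Matrix.of fun i j : Fin N =>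
    y j ^ (i:ℕ) * iteratedDeriv i f (a * y j) / (Nat.factorial i) with hM
  have hval : DDnum (fun _ => a) = M := by
    ext i j
    show DD i (G j) (fun _ => a) = _
    rw [DD_const]
    have h1 : G j = fun t => f (y j * t) := by
      funext t; rw [hG]; simp [mul_comm]
    rw [h1, iteratedDeriv_comp_const_mul (hf.of_le (by exact_mod_cast le_top)) (y j)]
    rw [hM]
    simp only [Matrix.of_apply]
    rw [mul_comm a (y j)]
  -- target = s * M.det
  have htarget : (Matrix.of fun i j : Fin N =>
      y i ^ (N - 1 - (j : ℕ)) * iteratedDeriv (N - 1 - (j : ℕ)) f (a * y i) /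
        (Nat.factorial (N - 1 - (j : ℕ)))).det = s * M.det := by
    have h1 : (Matrix.of fun i j : Fin N =>
        y i ^ (N - 1 - (j : ℕ)) * iteratedDeriv (N - 1 - (j : ℕ)) f (a * y i) /
          (Nat.factorial (N - 1 - (j : ℕ)))) = M.transpose.submatrix id ρ := by
      have hrev2 : ∀ q : Fin N, ((Fin.rev q : Fin N) : ℕ) = N - 1 - (q:ℕ) := by
        intro q
        rw [Fin.val_rev]
        omega
      ext i j
      show _ = M.transpose i (ρ j)
      rw [Matrix.transpose_apply, hM]
      simp only [Matrix.of_apply, hρ, Fin.revPerm_apply]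
      rw [hrev2 j]
    rw [h1, Matrix.det_permute', Matrix.det_transpose, hs]
  -- conclude
  have hlim : Filter.Tendsto (fun x : Fin N → ℝ => (DDnum x).det / s)
      (nhdsWithin (fun _ => a)
        ({x : Fin N → ℝ | Function.Injective x} \ {fun _ => a}))
      (nhds (M.det / s)) := by
    have := (hcont.tendsto (fun _ => a)).div_const s
    rw [hval] at this
    exact this.mono_left nhdsWithin_le_nhds
  have hMdiv : M.det / s = s * M.det := by
    rw [div_eq_mul_inv, hsinv, mul_comm]
  rw [htarget, ← hMdiv]
  apply hlim.congr'
  filter_upwards [self_mem_nhdsWithin] with x hxmem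
  exact (hratio x hxmem.1).symm
end

section
/- Let N ≥ 1, and let w : ℕ → ℝ and v : ℕ → ℝ satisfy Σ_{m∈ℕ} |w(m)|·(1 + |v(m)|)^{4N} < ∞. Then Σ_{n∈ℕ^N} (∏_{s=1}^N w(n_s)) · ( Δ(v(n_1)², …, v(n_N)²) )² = N! · det_{1≤i,j≤N}[ Σ_{m∈ℕ} w(m)·v(m)^{2i+2j−4} ], where the left-hand multi-indexed sum is absolutely summable and every entry series on the right converges absolutely. -/
/-- The Vandermonde product `Δ(x) = ∏_{1 ≤ j < k ≤ N} (x_k - x_j)`. -/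
def vandermondeProd {N : ℕ} (x : Fin N → ℝ) : ℝ :=
  ∏ p ∈ Finset.univ.filter (fun p : Fin N × Fin N => p.1 < p.2), (x p.2 - x p.1)

lemma vandermondeProd_eq_det {N : ℕ} (x : Fin N → ℝ) :
    vandermondeProd x = (Matrix.vandermonde x).det := by
  rw [Matrix.det_vandermonde, vandermondeProd, Finset.prod_sigma']
  exact Finset.prod_nbij' (fun p => ⟨p.1, p.2⟩) (fun q => (q.1, q.2))
    (fun p hp => by simpa using (Finset.mem_filter.mp hp).2)
    (fun q hq => by
      simp only [Finset.mem_sigma, Finset.mem_Ioi, Finset.mem_univ, true_and] at hq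
      simpa using hq)
    (fun p _ => rfl) (fun q _ => rfl) (fun p _ => rfl)

/-- The equivalence splitting off the first coordinate. -/
def piEquiv (N : ℕ) : (Fin (N + 1) → ℕ) ≃ ℕ × (Fin N → ℕ) :=
  ⟨fun n => (n 0, fun i => n i.succ), fun p => Fin.cons p.1 p.2,
    fun n => funext fun i => Fin.cases rfl (fun j => rfl) i, fun p => by
      refine Prod.ext rfl (funext fun i => ?_)
      simp⟩

/-- Factorization of a tsum over `Fin N → ℕ` of a product. -/
lemma pi_key : ∀ (N : ℕ) (h : Fin N → ℕ → ℝ), (∀ i, Summable fun m => |h i m|) →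
    Summable (fun n : Fin N → ℕ => |∏ i, h i (n i)|) ∧
    (∑' n : Fin N → ℕ, ∏ i, h i (n i)) = ∏ i, ∑' m, h i m := by
  intro N
  induction N with
  | zero =>
    intro h _
    refine ⟨Summable.of_finite, ?_⟩
    simp [tsum_eq_single (fun i => i.elim0 : Fin 0 → ℕ)
      (fun b hb => absurd (funext fun i => i.elim0) hb)]
  | succ N ih =>
    intro h hs
    obtain ⟨ihS, ihT⟩ := ih (fun i => h i.succ) (fun i => hs i.succ)
    have hfe : ∀ n : Fin (N + 1) → ℕ,
        (∏ i, h i (n i)) = h 0 (n 0) * ∏ i : Fin N, h i.succ (n i.succ) :=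
      fun n => Fin.prod_univ_succ _
    have hn1 : Summable fun m => ‖h 0 m‖ := by simpa only [Real.norm_eq_abs] using hs 0
    have hn2 : Summable fun k : Fin N → ℕ => ‖∏ i, h i.succ (k i)‖ := by
      simpa only [Real.norm_eq_abs] using ihS
    have hFs' : Summable fun p : ℕ × (Fin N → ℕ) => |h 0 p.1 * ∏ i, h i.succ (p.2 i)| := by
      simpa only [Real.norm_eq_abs] using hn1.mul_norm hn2
    constructor
    · have h3 : Summable ((fun p : ℕ × (Fin N → ℕ) =>
          |h 0 p.1 * ∏ i, h i.succ (p.2 i)|) ∘ (piEquiv N)) :=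
        hFs'.comp_injective (piEquiv N).injective
      refine h3.congr fun n => ?_
      show |h 0 (n 0) * ∏ i : Fin N, h i.succ (n i.succ)| = _
      rw [← hfe n]
    · have h1 : (∑' n : Fin (N + 1) → ℕ, ∏ i, h i (n i))
          = ∑' p : ℕ × (Fin N → ℕ), h 0 p.1 * ∏ i, h i.succ (p.2 i) := by
        rw [tsum_congr hfe]
        exact (piEquiv N).tsum_eq (fun p => h 0 p.1 * ∏ i : Fin N, h i.succ (p.2 i))
      have h2 : (∑' m, h 0 m) * (∑' k : Fin N → ℕ, ∏ i, h i.succ (k i))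
          = ∑' p : ℕ × (Fin N → ℕ), h 0 p.1 * ∏ i, h i.succ (p.2 i) :=
        tsum_mul_tsum_of_summable_norm hn1 hn2
      rw [h1, ← h2, ihT, Fin.prod_univ_succ]

/-- Expansion of the Vandermonde product as a signed sum over permutations. -/
lemma vdp_expand {N : ℕ} (x : Fin N → ℝ) :
    vandermondeProd x = ∑ σ : Equiv.Perm (Fin N),
      ((Equiv.Perm.sign σ : ℤ) : ℝ) * ∏ i, x i ^ ((σ i : ℕ)) := by
  rw [vandermondeProd_eq_det, ← Matrix.det_transpose, Matrix.det_apply']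
  refine Finset.sum_congr rfl fun σ _ => ?_
  simp [Matrix.transpose_apply, Matrix.vandermonde_apply]

/-- The double permutation sum identity: `∑ σ ∑ τ ε(σ)ε(τ) ∏ M (σ i) (τ i) = N! det M`. -/
lemma perm_double_sum {N : ℕ} (M : Matrix (Fin N) (Fin N) ℝ) :
    (∑ σ : Equiv.Perm (Fin N), ∑ τ : Equiv.Perm (Fin N),
      (((Equiv.Perm.sign σ : ℤ) : ℝ) * ((Equiv.Perm.sign τ : ℤ) : ℝ)) * ∏ i, M (σ i) (τ i))
    = (Nat.factorial N : ℝ) * M.det := by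
  have hinner : ∀ σ : Equiv.Perm (Fin N),
      (∑ τ : Equiv.Perm (Fin N),
        (((Equiv.Perm.sign σ : ℤ) : ℝ) * ((Equiv.Perm.sign τ : ℤ) : ℝ)) * ∏ i, M (σ i) (τ i))
      = M.det := by
    intro σ
    have h2 : (∑ τ : Equiv.Perm (Fin N),
        (((Equiv.Perm.sign σ : ℤ) : ℝ) * ((Equiv.Perm.sign τ : ℤ) : ℝ)) * ∏ i, M (σ i) (τ i))
        = ∑ ρ : Equiv.Perm (Fin N), ((Equiv.Perm.sign ρ : ℤ) : ℝ) * ∏ i, M i (ρ i) := by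
      refine Fintype.sum_equiv (Equiv.mulRight σ⁻¹) _ _ fun τ => ?_
      have hsign : ((Equiv.Perm.sign σ : ℤ) : ℝ) * ((Equiv.Perm.sign τ : ℤ) : ℝ)
          = ((Equiv.Perm.sign (τ * σ⁻¹) : ℤ) : ℝ) := by
        simp only [Equiv.Perm.sign_mul, Equiv.Perm.sign_inv]
        push_cast
        ring
      have hprod : (∏ i, M (σ i) (τ i)) = ∏ i, M i ((τ * σ⁻¹) i) := by
        calc (∏ i, M (σ i) (τ i)) = ∏ i, M (σ i) ((τ * σ⁻¹) (σ i)) :=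
              Finset.prod_congr rfl fun i _ => by simp [Equiv.Perm.mul_apply]
          _ = ∏ i, M i ((τ * σ⁻¹) i) := Equiv.prod_comp σ (fun j => M j ((τ * σ⁻¹) j))
      rw [hsign, hprod]
      rfl
    rw [h2, ← Matrix.det_transpose M, Matrix.det_apply']
    exact (Finset.sum_congr rfl fun ρ _ => by simp [Matrix.transpose_apply]).symm
  calc (∑ σ : Equiv.Perm (Fin N), ∑ τ : Equiv.Perm (Fin N),
        (((Equiv.Perm.sign σ : ℤ) : ℝ) * ((Equiv.Perm.sign τ : ℤ) : ℝ)) * ∏ i, M (σ i) (τ i))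
      = ∑ _σ : Equiv.Perm (Fin N), M.det := Finset.sum_congr rfl fun σ _ => hinner σ
    _ = (Nat.factorial N : ℝ) * M.det := by
        rw [Finset.sum_const, Finset.card_univ, Fintype.card_perm, Fintype.card_fin,
          nsmul_eq_mul]

/-- Per-term expansion of the summand. -/
lemma term_expand {N : ℕ} (w v : ℕ → ℝ) (n : Fin N → ℕ) :
    (∏ s : Fin N, w (n s)) * (vandermondeProd fun s : Fin N => v (n s) ^ 2) ^ 2
    = ∑ σ : Equiv.Perm (Fin N), ∑ τ : Equiv.Perm (Fin N),
        (((Equiv.Perm.sign σ : ℤ) : ℝ) * ((Equiv.Perm.sign τ : ℤ) : ℝ)) *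
          ∏ i, (w (n i) * v (n i) ^ (2 * ((σ i : ℕ)) + 2 * ((τ i : ℕ)))) := by
  rw [vdp_expand, sq, Finset.sum_mul_sum, Finset.mul_sum]
  refine Finset.sum_congr rfl fun σ _ => ?_
  rw [Finset.mul_sum]
  refine Finset.sum_congr rfl fun τ _ => ?_
  simp only [pow_add, pow_mul, Finset.prod_mul_distrib]
  ring

theorem stmt_3 (N : ℕ) (hN : 1 ≤ N) (w v : ℕ → ℝ)
    (hw : Summable fun m : ℕ => |w m| * (1 + |v m|) ^ (4 * N)) :
    (Summable fun n : Fin N → ℕ =>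
      |(∏ s : Fin N, w (n s)) * (vandermondeProd fun s : Fin N => v (n s) ^ 2) ^ 2|) ∧
    (∀ i j : Fin N, Summable fun m : ℕ =>
      |w m * v m ^ (2 * (i : ℕ) + 2 * (j : ℕ))|) ∧
    (∑' n : Fin N → ℕ,
        (∏ s : Fin N, w (n s)) * (vandermondeProd fun s : Fin N => v (n s) ^ 2) ^ 2)
      = (Nat.factorial N : ℝ) *
        (Matrix.of fun i j : Fin N =>
          ∑' m : ℕ, w m * v m ^ (2 * (i : ℕ) + 2 * (j : ℕ))).det := by
  -- entrywise absolute summability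
  have hentry : ∀ k : ℕ, k ≤ 4 * N → Summable fun m : ℕ => |w m * v m ^ k| := by
    intro k hk
    refine Summable.of_nonneg_of_le (fun m => abs_nonneg _) (fun m => ?_) hw
    rw [abs_mul, abs_pow]
    have h0 : (0 : ℝ) ≤ |v m| := abs_nonneg _
    have h1 : |v m| ^ k ≤ (1 + |v m|) ^ (4 * N) := by
      calc |v m| ^ k ≤ (1 + |v m|) ^ k := pow_le_pow_left₀ h0 (by linarith) k
        _ ≤ (1 + |v m|) ^ (4 * N) := pow_le_pow_right₀ (by linarith) hk
    exact mul_le_mul_of_nonneg_left h1 (abs_nonneg _)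
  have hk' : ∀ i j : Fin N, 2 * (i : ℕ) + 2 * (j : ℕ) ≤ 4 * N := by
    intro i j
    have := i.is_lt
    have := j.is_lt
    omega
  -- the basic factorization per pair of permutations
  have hP : ∀ σ τ : Equiv.Perm (Fin N),
      Summable (fun n : Fin N → ℕ =>
        |∏ i, (w (n i) * v (n i) ^ (2 * ((σ i : ℕ)) + 2 * ((τ i : ℕ))))|) ∧
      (∑' n : Fin N → ℕ, ∏ i, (w (n i) * v (n i) ^ (2 * ((σ i : ℕ)) + 2 * ((τ i : ℕ)))))
        = ∏ i, ∑' m : ℕ, w m * v m ^ (2 * ((σ i : ℕ)) + 2 * ((τ i : ℕ))) :=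
    fun σ τ => pi_key N (fun i m => w m * v m ^ (2 * ((σ i : ℕ)) + 2 * ((τ i : ℕ))))
      (fun i => hentry _ (hk' (σ i) (τ i)))
  have hc : ∀ σ τ : Equiv.Perm (Fin N),
      Summable (fun n : Fin N → ℕ =>
        (((Equiv.Perm.sign σ : ℤ) : ℝ) * ((Equiv.Perm.sign τ : ℤ) : ℝ)) *
          ∏ i, (w (n i) * v (n i) ^ (2 * ((σ i : ℕ)) + 2 * ((τ i : ℕ))))) :=
    fun σ τ => ((hP σ τ).1.of_abs).mul_left _
  have hFsum : Summable (fun n : Fin N → ℕ =>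
      (∏ s : Fin N, w (n s)) * (vandermondeProd fun s : Fin N => v (n s) ^ 2) ^ 2) := by
    refine Summable.congr ?_ (fun n => (term_expand w v n).symm)
    exact summable_sum fun σ _ => summable_sum fun τ _ => hc σ τ
  refine ⟨hFsum.abs, fun i j => hentry _ (hk' i j), ?_⟩
  rw [tsum_congr (term_expand w v)]
  rw [Summable.tsum_finsetSum (fun σ _ => summable_sum fun τ _ => hc σ τ)]
  have hstep : ∀ σ : Equiv.Perm (Fin N),
      (∑' n : Fin N → ℕ, ∑ τ : Equiv.Perm (Fin N),
        (((Equiv.Perm.sign σ : ℤ) : ℝ) * ((Equiv.Perm.sign τ : ℤ) : ℝ)) *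
          ∏ i, (w (n i) * v (n i) ^ (2 * ((σ i : ℕ)) + 2 * ((τ i : ℕ)))))
      = ∑ τ : Equiv.Perm (Fin N),
        (((Equiv.Perm.sign σ : ℤ) : ℝ) * ((Equiv.Perm.sign τ : ℤ) : ℝ)) *
          ∏ i, (Matrix.of fun i j : Fin N =>
            ∑' m : ℕ, w m * v m ^ (2 * (i : ℕ) + 2 * (j : ℕ))) (σ i) (τ i) := by
    intro σ
    rw [Summable.tsum_finsetSum (fun τ _ => hc σ τ)]
    refine Finset.sum_congr rfl fun τ _ => ?_
    rw [tsum_mul_left, (hP σ τ).2]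
    rfl
  rw [Finset.sum_congr rfl fun σ _ => hstep σ]
  exact perm_double_sum _
end

section
/- Let α > −1 be real and j ≥ 1 an integer. There exist real polynomials P and Q (depending on j and α) such that P has degree at most 2j−3 and only odd-degree terms (with P = 0 when j = 1), Q has degree at most 2j−2 and only even-degree terms, and for all z > 0: z^{2j−1} · J_α^{(2j−1)}(z) = ( (−1)^j · z^{2j−1} + P(z) ) · J_{α+1}(z) + Q(z) · J_α(z), where J_α^{(m)} denotes the m-th derivative of J_α on (0,∞). -/
/-!
On `(0, ∞)` we have `J_α(x) = (x/2)^α G_α(x²/4)` with `G_α(t) = Σ (-1)^k t^k / (k! Γ(k+α+1))`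
entire and `G_α' = -G_{α+1}`. Hence `J_α' = (α/x) J_α - J_{α+1}`, and with the three-term
recurrence `J_{α+1}' = J_α - ((α+1)/x) J_{α+1}`. Differentiating
`z^m J_α^{(m)} = A_m(z) J_{α+1}(z) + B_m(z) J_α(z)` therefore produces polynomials
`A_{m+1}, B_{m+1}`; by induction `A_m` is odd and `B_m` even, both of degree `≤ m`, and their
coefficients of degree `m` rotate as `(a, b) ↦ (-b, a)`, so `A_{2j-1}` has leading coefficient
`(-1)^j`.
-/

/-- The Bessel function of the first kind, for `x > 0`,
`J_α(x) = Σ_{k=0}^∞ (-1)^k (x/2)^{2k+α} / (k! Γ(k+α+1))`. -/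
noncomputable def besselJ (α x : ℝ) : ℝ :=
  ∑' k : ℕ, (-1 : ℝ) ^ k * (x / 2) ^ (2 * (k : ℝ) + α) /
    ((Nat.factorial k : ℝ) * Real.Gamma ((k : ℝ) + α + 1))

open Filter Topology Nat

noncomputable def besselCoeff (α : ℝ) (k : ℕ) : ℝ :=
  (-1) ^ k / (k ! * Real.Gamma (k + α + 1))

noncomputable def besselSeries (α t : ℝ) : ℝ :=
  ∑' k, besselCoeff α k * t ^ k

section Coefficients

variable {α : ℝ}

theorem besselCoeff_eq_mul_besselCoeff_add_one {k : ℕ} (hk : (k : ℝ) + α + 1 ≠ 0) :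
    besselCoeff α k = (k + α + 1) * besselCoeff (α + 1) k := by
  rw [besselCoeff, besselCoeff, ← add_assoc, Real.Gamma_add_one hk]
  field_simp

theorem succ_mul_besselCoeff_succ (α : ℝ) (k : ℕ) :
    (k + 1) * besselCoeff α (k + 1) = -besselCoeff (α + 1) k := by
  rw [besselCoeff, besselCoeff, factorial_succ, pow_succ]
  push_cast
  rw [show (k : ℝ) + 1 + α + 1 = k + (α + 1) + 1 by ring]
  field_simp

theorem besselCoeff_succ {k : ℕ} (hk : (k : ℝ) + α + 1 ≠ 0) :
    besselCoeff α (k + 1) = -besselCoeff α k / ((k + 1) * (k + α + 1)) := by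
  have := succ_mul_besselCoeff_succ α k
  rw [besselCoeff_eq_mul_besselCoeff_add_one hk]
  field_simp
  linarith

theorem abs_besselCoeff_le (hα : -1 < α) (k : ℕ) :
    |besselCoeff α k| ≤ |besselCoeff α 0| * (α + 1)⁻¹ ^ k / k ! := by
  have hα1 : 0 < α + 1 := by linarith
  induction k with
  | zero => simp
  | succ k ih =>
    have hk : (0 : ℝ) < k + α + 1 := by linarith [(k.cast_nonneg : (0 : ℝ) ≤ k)]
    rw [besselCoeff_succ hk.ne', abs_div, abs_neg, abs_of_pos (mul_pos (by positivity) hk)]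
    calc |besselCoeff α k| / ((k + 1) * (k + α + 1))
        ≤ |besselCoeff α 0| * (α + 1)⁻¹ ^ k / k ! / ((k + 1) * (α + 1)) := by
          gcongr; linarith [(k.cast_nonneg : (0 : ℝ) ≤ k)]
      _ = |besselCoeff α 0| * (α + 1)⁻¹ ^ (k + 1) / (k + 1) ! := by
          rw [factorial_succ, pow_succ]; push_cast; field_simp

theorem summable_norm_besselCoeff_mul_pow (hα : -1 < α) (t : ℝ) :
    Summable fun k => ‖besselCoeff α k * t ^ k‖ := by
  have hα1 : α + 1 ≠ 0 := by linarith
  refine .of_nonneg_of_le (fun _ => norm_nonneg _) (fun k => ?_)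
    ((Real.summable_pow_div_factorial (|t| / (α + 1))).mul_left |besselCoeff α 0|)
  rw [norm_mul, norm_pow, Real.norm_eq_abs, Real.norm_eq_abs]
  calc |besselCoeff α k| * |t| ^ k ≤ |besselCoeff α 0| * (α + 1)⁻¹ ^ k / k ! * |t| ^ k := by
        gcongr; exact abs_besselCoeff_le hα k
    _ = _ := by rw [div_pow, inv_pow]; field_simp

end Coefficients

section Series

variable {α : ℝ}

theorem summable_besselCoeff_mul_pow (hα : -1 < α) (t : ℝ) :
    Summable fun k => besselCoeff α k * t ^ k :=
  (summable_norm_besselCoeff_mul_pow hα t).of_norm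

theorem hasSum_besselCoeff_mul_deriv_pow (hα : -1 < α) (t : ℝ) :
    HasSum (fun k => besselCoeff α k * (k * t ^ (k - 1))) (-besselSeries (α + 1) t) := by
  rw [← hasSum_nat_add_iff' 1]
  simp only [Finset.range_one, Finset.sum_singleton, CharP.cast_eq_zero, zero_mul, mul_zero,
    sub_zero, add_tsub_cancel_right, cast_add, cast_one]
  refine (summable_besselCoeff_mul_pow (by linarith : -1 < α + 1) t).hasSum.neg.congr_fun
    fun k => ?_
  rw [← neg_mul, ← succ_mul_besselCoeff_succ]
  ring

theorem hasDerivAt_besselSeries (hα : -1 < α) (t : ℝ) :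
    HasDerivAt (besselSeries α) (-besselSeries (α + 1) t) t := by
  set R := |t| + 1
  have hR : 1 ≤ R := by simp [R]
  have ht : t ∈ Metric.ball (0 : ℝ) R := by simp [R]
  have hbound : ∀ (k : ℕ) (y : ℝ), y ∈ Metric.ball (0 : ℝ) R →
      ‖besselCoeff α k * (k * y ^ (k - 1))‖ ≤ ‖besselCoeff α k * (2 * R) ^ k‖ := by
    intro k y hy
    rw [mem_ball_zero_iff, Real.norm_eq_abs] at hy
    simp only [norm_mul, norm_pow, Real.norm_eq_abs, Nat.abs_cast, abs_two,
      abs_of_pos (by linarith : 0 < R)]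
    gcongr
    calc (k : ℝ) * |y| ^ (k - 1) ≤ 2 ^ k * R ^ k := by
          gcongr
          · exact_mod_cast Nat.lt_two_pow_self.le
          · exact (pow_le_pow_left₀ (abs_nonneg y) hy.le _).trans
              (pow_le_pow_right₀ hR (k.sub_le 1))
      _ = (2 * R) ^ k := (mul_pow 2 R k).symm
  have := hasDerivAt_tsum_of_isPreconnected (summable_norm_besselCoeff_mul_pow hα (2 * R))
    Metric.isOpen_ball (convex_ball _ _).isPreconnected
    (fun k y _ => (hasDerivAt_pow k y).const_mul (besselCoeff α k)) hbound
    (Metric.mem_ball_self (by linarith)) (summable_besselCoeff_mul_pow hα 0) ht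
  rwa [(hasSum_besselCoeff_mul_deriv_pow hα t).tsum_eq] at this

theorem besselSeries_recurrence (hα : -1 < α) (t : ℝ) :
    besselSeries α t = (α + 1) * besselSeries (α + 1) t - t * besselSeries (α + 1 + 1) t := by
  have hsum := ((summable_besselCoeff_mul_pow (by linarith : -1 < α + 1) t).hasSum.mul_left
    (α + 1)).add ((hasSum_besselCoeff_mul_deriv_pow (by linarith : -1 < α + 1) t).mul_left t)
  refine (summable_besselCoeff_mul_pow hα t).hasSum.unique (hsum.congr_fun fun k => ?_) |>.trans
    (by unfold besselSeries; ring)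
  have hk : (k : ℝ) + α + 1 ≠ 0 := by linarith [(k.cast_nonneg : (0 : ℝ) ≤ k)]
  rw [besselCoeff_eq_mul_besselCoeff_add_one hk]
  rcases k with _ | k
  · simp
  · simp only [add_tsub_cancel_right, pow_succ]; push_cast; ring

end Series

section Bessel

variable {α x : ℝ}

theorem besselJ_eq_rpow_mul_besselSeries (hx : 0 < x) :
    besselJ α x = (x / 2) ^ α * besselSeries α (x ^ 2 / 4) := by
  rw [besselJ, besselSeries, ← tsum_mul_left]
  refine tsum_congr fun k => ?_
  rw [Real.rpow_add (by positivity), show 2 * (k : ℝ) = ((2 * k : ℕ) : ℝ) by push_cast; ring,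
    Real.rpow_natCast, pow_mul, besselCoeff]
  ring

theorem hasDerivAt_besselJ (hα : -1 < α) (hx : 0 < x) :
    HasDerivAt (besselJ α) (α / x * besselJ α x - besselJ (α + 1) x) x := by
  have hx2 : 0 < x / 2 := by positivity
  have hsq : HasDerivAt (fun y : ℝ => y ^ 2 / 4) (x / 2) x := by
    refine ((hasDerivAt_pow 2 x).div_const 4).congr_deriv ?_
    norm_num
    ring
  have hprod := (((hasDerivAt_id x).div_const 2).rpow_const (p := α) (Or.inl hx2.ne')).mul
    ((hasDerivAt_besselSeries hα _).comp x hsq)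
  have hJ : besselJ α =ᶠ[𝓝 x] fun y => (y / 2) ^ α * besselSeries α (y ^ 2 / 4) :=
    eventually_of_mem (Ioi_mem_nhds hx) fun y hy => besselJ_eq_rpow_mul_besselSeries hy
  refine (hprod.congr_of_eventuallyEq hJ).congr_deriv ?_
  simp only [id, Function.comp_apply, besselJ_eq_rpow_mul_besselSeries hx, Real.rpow_sub hx2,
    Real.rpow_add hx2, Real.rpow_one]
  field_simp
  ring

theorem besselJ_recurrence (hα : -1 < α) (hx : 0 < x) :
    besselJ α x = 2 * (α + 1) / x * besselJ (α + 1) x - besselJ (α + 1 + 1) x := by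
  have hx2 : 0 < x / 2 := by positivity
  simp only [besselJ_eq_rpow_mul_besselSeries hx, besselSeries_recurrence hα (x ^ 2 / 4),
    Real.rpow_add hx2, Real.rpow_one]
  field_simp
  ring

theorem hasDerivAt_besselJ_add_one (hα : -1 < α) (hx : 0 < x) :
    HasDerivAt (besselJ (α + 1)) (besselJ α x - (α + 1) / x * besselJ (α + 1) x) x := by
  convert hasDerivAt_besselJ (by linarith : -1 < α + 1) hx using 1
  rw [besselJ_recurrence hα hx]
  ring

end Bessel

open Polynomial

section Step

variable {R : Type*} [CommSemiring R]

noncomputable def besselStep (c : R) (p q : R[X]) : R[X] :=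
  X * derivative p + C c * p + X * q

theorem coeff_besselStep_zero (c : R) (p q : R[X]) :
    (besselStep c p q).coeff 0 = c * p.coeff 0 := by
  simp [besselStep]

theorem coeff_besselStep_succ (c : R) (p q : R[X]) (k : ℕ) :
    (besselStep c p q).coeff (k + 1) = (k + 1 + c) * p.coeff (k + 1) + q.coeff k := by
  simp only [besselStep, coeff_add, coeff_X_mul, coeff_derivative, coeff_C_mul]
  ring

theorem coeff_besselStep_ne_zero {c : R} {p q : R[X]} {k : ℕ}
    (h : (besselStep c p q).coeff k ≠ 0) :
    p.coeff k ≠ 0 ∨ ∃ i, k = i + 1 ∧ q.coeff i ≠ 0 := by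
  rcases k with _ | i
  · rw [coeff_besselStep_zero] at h
    exact .inl (right_ne_zero_of_mul h)
  · rw [coeff_besselStep_succ] at h
    by_contra! hpq
    rw [hpq.1, hpq.2 i rfl, mul_zero, add_zero] at h
    exact h rfl

end Step

/-- The pair `(A_m, B_m)`. -/
noncomputable def besselPolys (α : ℝ) : ℕ → ℝ[X] × ℝ[X]
  | 0 => (0, 1)
  | m + 1 => (besselStep (-(m + α + 1)) (besselPolys α m).1 (-(besselPolys α m).2),
      besselStep (α - m) (besselPolys α m).2 (besselPolys α m).1)

theorem pow_succ_mul_deriv_eq {f g : ℝ → ℝ} {g' z : ℝ} (m : ℕ) (hz : z ≠ 0)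
    (hg : HasDerivAt g g' z) (hf : f =ᶠ[𝓝 z] fun w => g w / w ^ m) :
    z ^ (m + 1) * deriv f z = z * g' - m * g z := by
  rw [hf.deriv_eq, (hg.fun_div (hasDerivAt_pow m z) (pow_ne_zero m hz)).deriv]
  rcases m with _ | m
  · simp
  · simp only [add_tsub_cancel_right]
    push_cast
    field_simp
    ring

theorem pow_mul_iteratedDeriv_besselJ {α : ℝ} (hα : -1 < α) (m : ℕ) {z : ℝ} (hz : 0 < z) :
    z ^ m * iteratedDeriv m (besselJ α) z =
      (besselPolys α m).1.eval z * besselJ (α + 1) z +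
        (besselPolys α m).2.eval z * besselJ α z := by
  induction m generalizing z with
  | zero => simp [besselPolys]
  | succ m ih =>
    set A := (besselPolys α m).1
    set B := (besselPolys α m).2
    have hg := ((A.hasDerivAt z).fun_mul (hasDerivAt_besselJ_add_one hα hz)).fun_add
      ((B.hasDerivAt z).fun_mul (hasDerivAt_besselJ hα hz))
    have hf : iteratedDeriv m (besselJ α) =ᶠ[𝓝 z]
        fun w => (A.eval w * besselJ (α + 1) w + B.eval w * besselJ α w) / w ^ m :=
      eventually_of_mem (Ioi_mem_nhds hz) fun w hw =>
        (eq_div_iff (pow_ne_zero m (ne_of_gt hw))).mpr (by rw [mul_comm, ih hw])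
    rw [iteratedDeriv_succ, pow_succ_mul_deriv_eq m hz.ne' hg hf]
    simp only [besselPolys, besselStep, eval_add, eval_mul, eval_X, eval_C, eval_neg, A, B]
    field_simp
    ring

theorem coeff_besselPolys_ne_zero (α : ℝ) (m : ℕ) :
    (∀ k, (besselPolys α m).1.coeff k ≠ 0 → Odd k ∧ k ≤ m) ∧
      ∀ k, (besselPolys α m).2.coeff k ≠ 0 → Even k ∧ k ≤ m := by
  induction m with
  | zero => simp [besselPolys, coeff_one]
  | succ m ih =>
    constructor <;> intro k hk <;>
      rcases coeff_besselStep_ne_zero hk with hk | ⟨i, rfl, hi⟩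
    · obtain ⟨hk, hle⟩ := ih.1 k hk
      exact ⟨hk, by omega⟩
    · obtain ⟨hi, hle⟩ := ih.2 i (by simpa using hi)
      exact ⟨hi.add_one, by omega⟩
    · obtain ⟨hk, hle⟩ := ih.2 k hk
      exact ⟨hk, by omega⟩
    · obtain ⟨hi, hle⟩ := ih.1 i hi
      exact ⟨hi.add_one, by omega⟩

theorem coeff_besselPolys_eq_zero_of_lt (α : ℝ) {m k : ℕ} (hk : m < k) :
    (besselPolys α m).1.coeff k = 0 ∧ (besselPolys α m).2.coeff k = 0 := by
  constructor <;> by_contra h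
  · exact absurd ((coeff_besselPolys_ne_zero α m).1 k h).2 (by omega)
  · exact absurd ((coeff_besselPolys_ne_zero α m).2 k h).2 (by omega)

theorem coeff_besselPolys_succ_self (α : ℝ) (m : ℕ) :
    (besselPolys α (m + 1)).1.coeff (m + 1) = -(besselPolys α m).2.coeff m ∧
      (besselPolys α (m + 1)).2.coeff (m + 1) = (besselPolys α m).1.coeff m := by
  obtain ⟨hA, hB⟩ := coeff_besselPolys_eq_zero_of_lt α (lt_add_one m)
  simp only [besselPolys, coeff_besselStep_succ, hA, hB, coeff_neg]
  simp

theorem coeff_besselPolys_fst_self (α : ℝ) {j : ℕ} (hj : 1 ≤ j) :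
    (besselPolys α (2 * j - 1)).1.coeff (2 * j - 1) = (-1) ^ j := by
  induction j, hj using Nat.le_induction with
  | base => simp [besselPolys, besselStep, coeff_X]
  | succ j hj ih =>
    rw [show 2 * (j + 1) - 1 = 2 * j - 1 + 1 + 1 by omega, (coeff_besselPolys_succ_self α _).1,
      (coeff_besselPolys_succ_self α _).2, ih, pow_succ]
    ring

theorem stmt_9 (α : ℝ) (hα : -1 < α) (j : ℕ) (hj : 1 ≤ j) :
    ∃ P Q : Polynomial ℝ,
      (∀ k : ℕ, P.coeff k ≠ 0 → Odd k ∧ k ≤ 2 * j - 3) ∧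
      (∀ k : ℕ, Q.coeff k ≠ 0 → Even k ∧ k ≤ 2 * j - 2) ∧
      ∀ z : ℝ, 0 < z →
        z ^ (2 * j - 1) * iteratedDeriv (2 * j - 1) (besselJ α) z =
          ((-1 : ℝ) ^ j * z ^ (2 * j - 1) + P.eval z) * besselJ (α + 1) z +
            Q.eval z * besselJ α z := by
  set A := (besselPolys α (2 * j - 1)).1
  obtain ⟨hA, hB⟩ := coeff_besselPolys_ne_zero α (2 * j - 1)
  refine ⟨A - C ((-1) ^ j) * X ^ (2 * j - 1), (besselPolys α (2 * j - 1)).2, fun k hk => ?_,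
    fun k hk => ?_, fun z hz => ?_⟩
  · rw [coeff_sub, coeff_C_mul, coeff_X_pow] at hk
    have hkj : k ≠ 2 * j - 1 := by
      rintro rfl
      simp [coeff_besselPolys_fst_self α hj, A] at hk
    obtain ⟨⟨i, rfl⟩, hle⟩ := hA k (by simpa [hkj] using hk)
    exact ⟨odd_two_mul_add_one i, by omega⟩
  · obtain ⟨⟨i, rfl⟩, hle⟩ := hB k hk
    exact ⟨⟨i, rfl⟩, by omega⟩
  · rw [pow_mul_iteratedDeriv_besselJ hα _ hz]
    simp only [eval_sub, eval_mul, eval_C, eval_pow, eval_X, A]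
    ring
end

section
/- For all real t > 0, M > 0 and all x, y ∈ ℝ, both of the following series converge absolutely and Σ_{n=1}^∞ (2/M) · cos( (n − 1/2)·π·x / M ) · cos( (n − 1/2)·π·y / M ) · e^{ −(n − 1/2)² π² t / (2M²) } = Σ_{n∈ℤ} ( (−1)^n / √(2πt) ) · ( e^{ −(y − x − 2nM)² / (2t) } + e^{ −(y + x + 2nM)² / (2t) } ). -/
/-!
Both sides are the heat kernel on `[0, M]` with a Neumann condition at `0` and a Dirichlet
condition at `M`. Writing the product of cosines as a sum of two cosines, and using that the
summand `n ↦ e^{-a(n+1/2)²} cos(b(n+1/2))` is symmetric under `n ↦ -(n+1)`, each series over `ℕ`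
is half of a series over `ℤ`. Poisson summation for the Gaussian (Jacobi's theta transformation)
turns `∑_{n∈ℤ} e^{-a(n+1/2)²} cos(b(n+1/2))` into `√(π/a) ∑_{n∈ℤ} (-1)ⁿ e^{-(b-2πn)²/(4a)}`; the
half-integer shift becomes the sign `e^{iπn} = (-1)ⁿ`, and with `a = π²t/(2M²)`, `b = πu/M` this
is the method-of-images series.
-/

open Real

lemma summable_exp_neg_mul_add_sq {a : ℝ} (ha : 0 < a) (c : ℝ) :
    Summable fun n : ℤ => rexp (-a * (n + c) ^ 2) := by
  have hτ : 0 < (Complex.I * (a / π : ℝ)).im := by simpa using div_pos ha pi_pos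
  refine (((summable_jacobiTheta₂_term_iff (Complex.I * (a * c / π : ℝ)) _).2 hτ).norm.mul_left
    (rexp (-a * c ^ 2))).congr fun n => ?_
  rw [norm_jacobiTheta₂_term, ← Real.exp_add]
  congr 1
  simp only [Complex.mul_im, Complex.I_re, Complex.I_im, Complex.ofReal_re, Complex.ofReal_im]
  field_simp
  ring

open Complex in
theorem Complex.tsum_exp_neg_mul_add_half_sq {a : ℂ} (ha : 0 < a.re) (b : ℂ) :
    ∑' n : ℤ, cexp (-a * (n + 1 / 2) ^ 2 + b * (n + 1 / 2)) =
      1 / (a / π) ^ (1 / 2 : ℂ) *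
        ∑' n : ℤ, (-1) ^ n * cexp ((b - 2 * π * I * n) ^ 2 / (4 * a)) := by
  have ha₀ : a ≠ 0 := fun h => by simp [h] at ha
  have hπ : (π : ℂ) ≠ 0 := ofReal_ne_zero.2 pi_ne_zero
  have ha_div : 0 < (a / π).re := by
    rw [div_ofReal_re]; exact div_pos ha pi_pos
  -- Completing the square: `-a(n+1/2)² + b(n+1/2)` is this quadratic in `n` plus `b/2 - a/4`.
  have hpoisson := Complex.tsum_exp_neg_quadratic ha_div ((b - a) / (2 * π))
  have hlhs : ∀ n : ℤ, cexp (-a * (n + 1 / 2) ^ 2 + b * (n + 1 / 2)) =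
      cexp (b / 2 - a / 4) * cexp (-π * (a / π) * n ^ 2 + 2 * π * ((b - a) / (2 * π)) * n) := by
    intro n
    rw [← Complex.exp_add]
    congr 1
    field_simp
    ring
  have hrhs : ∀ n : ℤ,
      cexp (b / 2 - a / 4) * cexp (-π / (a / π) * (n + I * ((b - a) / (2 * π))) ^ 2)
        = (-1) ^ n * cexp ((b - 2 * π * I * n) ^ 2 / (4 * a)) := by
    intro n
    rw [← Complex.exp_add, ← Complex.exp_pi_mul_I, ← Complex.exp_int_mul, ← Complex.exp_add]
    congr 1
    field_simp
    ring_nf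
    rw [Complex.I_sq]
    ring
  simp_rw [hlhs, tsum_mul_left, hpoisson, ← hrhs, tsum_mul_left]
  ring

open Complex in
theorem tsum_exp_neg_mul_add_half_sq_mul_cos {a : ℝ} (ha : 0 < a) (b : ℝ) :
    ∑' n : ℤ, rexp (-a * (n + 1 / 2) ^ 2) * Real.cos (b * (n + 1 / 2)) =
      √(π / a) * ∑' n : ℤ, (-1) ^ n * rexp (-(b - 2 * π * n) ^ 2 / (4 * a)) := by
  have h := Complex.tsum_exp_neg_mul_add_half_sq (a := a) (by simpa) (b * I)
  have hterm : ∀ n : ℤ, cexp (-a * (n + 1 / 2) ^ 2 + b * I * (n + 1 / 2)) =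
      rexp (-a * (n + 1 / 2) ^ 2) * cexp ((b * (n + 1 / 2) : ℝ) * I) := by
    intro n
    rw [ofReal_exp, ← Complex.exp_add]
    push_cast
    ring_nf
  have hsum : Summable fun n : ℤ => cexp (-a * (n + 1 / 2) ^ 2 + b * I * (n + 1 / 2)) := by
    refine .of_norm ((summable_exp_neg_mul_add_sq ha (1 / 2)).congr fun n => ?_)
    rw [hterm, norm_mul, norm_exp_ofReal_mul_I, mul_one, Complex.norm_of_nonneg (Real.exp_pos _).le]
  have hcoef : 1 / ((a : ℂ) / π) ^ (1 / 2 : ℂ) = (√(π / a) : ℝ) := by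
    rw [← ofReal_div, show (1 / 2 : ℂ) = ((1 / 2 : ℝ) : ℂ) by push_cast; rfl,
      ← ofReal_cpow (by positivity), ← Real.sqrt_eq_rpow, ← ofReal_one, ← ofReal_div, one_div,
      ← Real.sqrt_inv, inv_div]
  have hrhs : ∀ n : ℤ, (-1) ^ n * cexp ((b * I - 2 * π * I * n) ^ 2 / (4 * a)) =
      ((-1) ^ n * rexp (-(b - 2 * π * n) ^ 2 / (4 * a)) : ℝ) := by
    intro n
    push_cast
    ring_nf
    rw [I_sq]
    ring_nf
  simp_rw [hrhs, hcoef, ← ofReal_tsum, ← ofReal_mul] at h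
  have hre := congrArg re h
  rw [re_tsum hsum, ofReal_re] at hre
  rw [← hre]
  refine tsum_congr fun n => ?_
  rw [hterm, re_ofReal_mul, exp_ofReal_mul_I_re]

lemma Summable.hasSum_nat_half_of_neg_add_one {f : ℤ → ℝ} (hf : Summable f)
    (hsymm : ∀ n : ℕ, f (-(n + 1)) = f n) : HasSum (fun n : ℕ => f n) ((∑' n : ℤ, f n) / 2) := by
  have hnat : Summable fun n : ℕ => f n := hf.comp_injective Nat.cast_injective
  convert hnat.hasSum using 1
  rw [tsum_of_nat_of_neg_add_one hnat (hnat.congr fun n => (hsymm n).symm), tsum_congr hsymm]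
  ring

lemma hasSum_nat_exp_mul_cos {t M : ℝ} (ht : 0 < t) (hM : 0 < M) (u : ℝ) :
    HasSum (fun n : ℕ => rexp (-(n + 1 / 2) ^ 2 * π ^ 2 * t / (2 * M ^ 2)) *
        Real.cos ((n + 1 / 2) * π * u / M))
      (M / √(2 * π * t) * ∑' n : ℤ, (-1) ^ n * rexp (-(u - 2 * n * M) ^ 2 / (2 * t))) := by
  set a := π ^ 2 * t / (2 * M ^ 2) with ha_def
  have ha : 0 < a := by positivity
  set f : ℤ → ℝ := fun n => rexp (-a * (n + 1 / 2) ^ 2) * Real.cos (π * u / M * (n + 1 / 2))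
  have hf : Summable f := by
    refine (summable_exp_neg_mul_add_sq ha (1 / 2)).of_norm_bounded fun n => ?_
    rw [norm_mul, Real.norm_eq_abs, Real.abs_exp]
    exact mul_le_of_le_one_right (Real.exp_pos _).le (Real.abs_cos_le_one _)
  have hsymm : ∀ n : ℕ, f (-(n + 1)) = f n := fun n => by
    simp only [f]
    rw [show ((-(n + 1) : ℤ) : ℝ) + 1 / 2 = -((n : ℤ) + 1 / 2) by push_cast; ring,
      neg_sq, mul_neg, Real.cos_neg]
  have hcoef : √(π / a) / 2 = M / √(2 * π * t) := by
    rw [show π / a = (2 * M / √(2 * π * t)) ^ 2 by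
      rw [div_pow, Real.sq_sqrt (by positivity), ha_def]; field_simp, Real.sqrt_sq (by positivity)]
    ring
  convert hf.hasSum_nat_half_of_neg_add_one hsymm using 1
  · exact funext fun n => by simp only [f, a]; push_cast; ring_nf
  · rw [tsum_exp_neg_mul_add_half_sq_mul_cos ha, mul_div_right_comm, hcoef]
    congr 1
    refine tsum_congr fun n => ?_
    rw [ha_def]
    congr 2
    field_simp
    ring

lemma summable_neg_one_zpow_mul_exp_neg_sq_div {t M : ℝ} (ht : 0 < t) (hM : M ≠ 0)
    (u : ℝ) : Summable fun n : ℤ => (-1) ^ n * rexp (-(u - 2 * n * M) ^ 2 / (2 * t)) := by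
  refine (summable_exp_neg_mul_add_sq (a := 2 * M ^ 2 / t) (by positivity)
    (-(u / (2 * M)))).of_norm_bounded fun n => le_of_eq ?_
  rw [norm_mul, norm_zpow, norm_neg, norm_one, one_zpow, one_mul, Real.norm_eq_abs, Real.abs_exp]
  congr 1
  field_simp
  ring

theorem stmt_11 (t M : ℝ) (ht : 0 < t) (hM : 0 < M) (x y : ℝ) :
    (Summable fun n : ℕ =>
      |(2 / M) * Real.cos (((n : ℝ) + 1 - 1 / 2) * Real.pi * x / M) *
        Real.cos (((n : ℝ) + 1 - 1 / 2) * Real.pi * y / M) *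
        Real.exp (-((n : ℝ) + 1 - 1 / 2) ^ 2 * Real.pi ^ 2 * t / (2 * M ^ 2))|) ∧
    (Summable fun n : ℤ =>
      |((-1 : ℝ) ^ n / Real.sqrt (2 * Real.pi * t)) *
        (Real.exp (-(y - x - 2 * (n : ℝ) * M) ^ 2 / (2 * t)) +
          Real.exp (-(y + x + 2 * (n : ℝ) * M) ^ 2 / (2 * t)))|) ∧
    (∑' n : ℕ, (2 / M) * Real.cos (((n : ℝ) + 1 - 1 / 2) * Real.pi * x / M) *
        Real.cos (((n : ℝ) + 1 - 1 / 2) * Real.pi * y / M) *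
        Real.exp (-((n : ℝ) + 1 - 1 / 2) ^ 2 * Real.pi ^ 2 * t / (2 * M ^ 2)))
      = ∑' n : ℤ, ((-1 : ℝ) ^ n / Real.sqrt (2 * Real.pi * t)) *
          (Real.exp (-(y - x - 2 * (n : ℝ) * M) ^ 2 / (2 * t)) +
            Real.exp (-(y + x + 2 * (n : ℝ) * M) ^ 2 / (2 * t))) := by
  set g : ℝ → ℕ → ℝ := fun u n =>
    rexp (-(n + 1 / 2) ^ 2 * π ^ 2 * t / (2 * M ^ 2)) * Real.cos ((n + 1 / 2) * π * u / M)
  set K : ℝ → ℤ → ℝ := fun u n => (-1) ^ n * rexp (-(u - 2 * n * M) ^ 2 / (2 * t))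
  have hL : ∀ n : ℕ, (2 / M) * Real.cos (((n : ℝ) + 1 - 1 / 2) * π * x / M) *
      Real.cos (((n : ℝ) + 1 - 1 / 2) * π * y / M) *
      rexp (-((n : ℝ) + 1 - 1 / 2) ^ 2 * π ^ 2 * t / (2 * M ^ 2))
        = (g (y - x) n + g (-(y + x)) n) / M := fun n => by
    simp only [g]
    rw [show ((n : ℝ) + 1 / 2) * π * (y - x) / M
        = ((n : ℝ) + 1 - 1 / 2) * π * y / M - ((n : ℝ) + 1 - 1 / 2) * π * x / M by ring,
      show ((n : ℝ) + 1 / 2) * π * -(y + x) / M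
        = -(((n : ℝ) + 1 - 1 / 2) * π * y / M + ((n : ℝ) + 1 - 1 / 2) * π * x / M) by ring,
      Real.cos_neg, Real.cos_sub, Real.cos_add, show (n : ℝ) + 1 / 2 = n + 1 - 1 / 2 by ring]
    field_simp
    ring
  have hR : ∀ n : ℤ, ((-1 : ℝ) ^ n / √(2 * π * t)) *
      (rexp (-(y - x - 2 * n * M) ^ 2 / (2 * t)) + rexp (-(y + x + 2 * n * M) ^ 2 / (2 * t)))
        = (K (y - x) n + K (-(y + x)) n) / √(2 * π * t) := fun n => by
    simp only [K]
    ring_nf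
  have hg := ((hasSum_nat_exp_mul_cos ht hM (y - x)).add
    (hasSum_nat_exp_mul_cos ht hM (-(y + x)))).div_const M
  have hK₁ := summable_neg_one_zpow_mul_exp_neg_sq_div ht hM.ne' (y - x)
  have hK₂ := summable_neg_one_zpow_mul_exp_neg_sq_div ht hM.ne' (-(y + x))
  simp_rw [hL, hR]
  refine ⟨hg.summable.abs, ((hK₁.add hK₂).div_const _).abs, ?_⟩
  rw [hg.tsum_eq, tsum_div_const, hK₁.tsum_add hK₂]
  field_simp
end

section
/- Fix real t > 0 and x, y ∈ ℝ. Then lim_{M → ∞} Σ_{n=1}^∞ (2/M) · cos( (n − 1/2)·π·x / M ) · cos( (n − 1/2)·π·y / M ) · e^{ −(n − 1/2)² π² t / (2M²) } = (1/√(2πt)) · ( e^{ −(x−y)²/(2t) } + e^{ −(x+y)²/(2t) } ), where for each M > 0 the series converges absolutely. -/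
/-!
The series is a midpoint Riemann sum, with mesh `1 / M`, of
`f u = 2 cos (π x u) cos (π y u) exp (-π² t u² / 2)` over `[0, ∞)`. The Gaussian factor dominates
the series by a geometric one and dominates the step functions `u ↦ f ((⌊u M⌋ + 1/2) / M)` by a
shifted Gaussian, so dominated convergence gives the limit `∫₀^∞ f`. Writing `2 cos α cos β` as
`cos (α - β) + cos (α + β)`, the integral is evaluated with the Fourier transform of the Gaussian.
-/

open Filter MeasureTheory Real Set Topology

lemma integrable_cexp_mul_I_mul_cexp_neg_mul_sq {b : ℂ} (hb : 0 < b.re) (c : ℂ) :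
    Integrable fun u : ℝ => Complex.exp (Complex.I * c * u) * Complex.exp (-b * u ^ 2) := by
  simpa [← Complex.exp_add, add_comm] using integrable_cexp_quadratic hb (Complex.I * c) 0

lemma integrable_cos_mul_mul_exp_neg_mul_sq {a : ℝ} (ha : 0 < a) (c : ℝ) :
    Integrable fun u : ℝ => cos (c * u) * exp (-a * u ^ 2) := by
  refine (integrable_exp_neg_mul_sq ha).mono' (by fun_prop) (ae_of_all _ fun u => ?_)
  rw [norm_mul, norm_of_nonneg (exp_nonneg _)]
  exact mul_le_of_le_one_left (exp_nonneg _) (abs_cos_le_one _)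

lemma integral_cos_mul_mul_exp_neg_mul_sq {a : ℝ} (ha : 0 < a) (c : ℝ) :
    ∫ u : ℝ, cos (c * u) * exp (-a * u ^ 2) = √(π / a) * exp (-c ^ 2 / (4 * a)) := by
  have hb : 0 < (a : ℂ).re := by simpa using ha
  have h := congrArg Complex.re (fourierIntegral_gaussian hb c)
  rw [← RCLike.re_to_complex, ← integral_re (integrable_cexp_mul_I_mul_cexp_neg_mul_sq hb c)] at h
  convert h using 1
  · congr 1 with u
    rw [RCLike.re_to_complex, ← Complex.exp_add, Complex.exp_re]
    simp [mul_comm, ← Complex.ofReal_pow]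
  · have hsqrt : ((π : ℂ) / a) ^ (1 / 2 : ℂ) = (√(π / a) : ℝ) := by
      rw [sqrt_eq_rpow, Complex.ofReal_cpow (by positivity)]
      push_cast
      ring_nf
    rw [hsqrt]
    norm_cast

lemma integral_Ioi_of_even {E : Type*} [NormedAddCommGroup E] [NormedSpace ℝ E] {f : ℝ → E}
    (hf : Integrable f) (heven : ∀ u, f (-u) = f u) :
    (2 : ℝ) • ∫ u in Ioi 0, f u = ∫ u, f u := by
  have hIic : ∫ u in Iic 0, f u = ∫ u in Ioi 0, f u := by
    simpa [heven] using (integral_comp_neg_Ioi 0 f).symm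
  rw [← intervalIntegral.integral_Iic_add_Ioi hf.integrableOn hf.integrableOn, hIic, two_smul]

lemma integral_Ioi_cos_mul_mul_exp_neg_mul_sq {a : ℝ} (ha : 0 < a) (c : ℝ) :
    ∫ u in Ioi 0, cos (c * u) * exp (-a * u ^ 2) = √(π / a) / 2 * exp (-c ^ 2 / (4 * a)) := by
  have h := integral_Ioi_of_even (integrable_cos_mul_mul_exp_neg_mul_sq ha c)
    fun u => by simp [mul_neg]
  rw [integral_cos_mul_mul_exp_neg_mul_sq ha, smul_eq_mul] at h
  linarith

lemma integral_Ioi_two_mul_cos_mul_cos_mul_exp_neg_mul_sq {a : ℝ} (ha : 0 < a) (p q : ℝ) :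
    ∫ u in Ioi 0, 2 * cos (p * u) * cos (q * u) * exp (-a * u ^ 2) =
      √(π / a) / 2 * (exp (-(p - q) ^ 2 / (4 * a)) + exp (-(p + q) ^ 2 / (4 * a))) := by
  have hprod (u : ℝ) : 2 * cos (p * u) * cos (q * u) * exp (-a * u ^ 2) =
      cos ((p - q) * u) * exp (-a * u ^ 2) + cos ((p + q) * u) * exp (-a * u ^ 2) := by
    rw [sub_mul, add_mul, cos_sub, cos_add]
    ring
  simp_rw [hprod]
  rw [integral_add (integrable_cos_mul_mul_exp_neg_mul_sq ha _).integrableOn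
    (integrable_cos_mul_mul_exp_neg_mul_sq ha _).integrableOn,
    integral_Ioi_cos_mul_mul_exp_neg_mul_sq ha, integral_Ioi_cos_mul_mul_exp_neg_mul_sq ha, mul_add]

lemma integral_Ioi_two_mul_cos_mul_cos_mul_exp_eq_heatKernel {t : ℝ} (ht : 0 < t) (x y : ℝ) :
    ∫ u in Ioi 0, 2 * cos (π * x * u) * cos (π * y * u) * exp (-(π ^ 2 * t / 2) * u ^ 2) =
      1 / √(2 * π * t) * (exp (-(x - y) ^ 2 / (2 * t)) + exp (-(x + y) ^ 2 / (2 * t))) := by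
  have ha : 0 < π ^ 2 * t / 2 := by positivity
  rw [integral_Ioi_two_mul_cos_mul_cos_mul_exp_neg_mul_sq ha]
  have hsqrt : √(π / (π ^ 2 * t / 2)) / 2 = 1 / √(2 * π * t) := by
    rw [div_eq_div_iff (by norm_num) (by positivity), one_mul, ← sqrt_mul (by positivity)]
    rw [show π / (π ^ 2 * t / 2) * (2 * π * t) = 2 ^ 2 by field_simp, sqrt_sq zero_le_two]
  have hexp (z : ℝ) : -(π * z) ^ 2 / (4 * (π ^ 2 * t / 2)) = -z ^ 2 / (2 * t) := by
    field_simp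
    ring
  rw [hsqrt, ← mul_sub, ← mul_add, hexp, hexp]

noncomputable def midpointStep (f : ℝ → ℝ) (M u : ℝ) : ℝ := f ((⌊u * M⌋₊ + 1 / 2) / M)

section MidpointStep

variable {f : ℝ → ℝ} {M u : ℝ}

lemma mem_Ico_natCast_div_iff (hM : 0 < M) {n : ℕ} :
    u ∈ Ico (n / M) ((n + 1) / M) ↔ 0 ≤ u ∧ ⌊u * M⌋₊ = n := by
  rw [mem_Ico, div_le_iff₀ hM, lt_div_iff₀ hM]
  constructor
  · rintro ⟨hn, hn'⟩
    have hu : 0 ≤ u := nonneg_of_mul_nonneg_left ((Nat.cast_nonneg n).trans hn) hM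
    exact ⟨hu, (Nat.floor_eq_iff (by positivity)).2 ⟨hn, hn'⟩⟩
  · rintro ⟨hu, rfl⟩
    exact ⟨Nat.floor_le (by positivity), Nat.lt_floor_add_one _⟩

lemma iUnion_Ico_natCast_div (hM : 0 < M) :
    ⋃ n : ℕ, Ico (n / M) ((n + 1) / M) = Ici 0 := by
  ext u
  simp only [mem_iUnion, mem_Ico_natCast_div_iff hM, exists_and_left, exists_eq', and_true,
    mem_Ici]

lemma pairwise_disjoint_Ico_natCast_div (hM : 0 < M) :
    Pairwise (Function.onFun Disjoint fun n : ℕ => Ico (n / M) ((n + 1) / M)) := by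
  intro m n hmn
  refine Set.disjoint_left.2 fun u hm hn => hmn ?_
  rw [mem_Ico_natCast_div_iff hM] at hm hn
  exact hm.2.symm.trans hn.2

lemma integral_Ici_midpointStep (hM : 0 < M) (hint : IntegrableOn (midpointStep f M) (Ici 0)) :
    ∫ u in Ici 0, midpointStep f M u = ∑' n : ℕ, f ((n + 1 / 2) / M) / M := by
  have hcell (n : ℕ) :
      ∫ u in Ico (n / M) ((n + 1) / M), midpointStep f M u = f ((n + 1 / 2) / M) / M := by
    have hconst : EqOn (midpointStep f M) (fun _ => f ((n + 1 / 2) / M))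
        (Ico (n / M) ((n + 1) / M)) :=
      fun u hu => by simp only [midpointStep, ((mem_Ico_natCast_div_iff hM).1 hu).2]
    have hlength : (n + 1) / M - n / M = 1 / M := by ring
    rw [setIntegral_congr_fun measurableSet_Ico hconst, setIntegral_const, measureReal_def,
      Real.volume_Ico, hlength, ENNReal.toReal_ofReal (by positivity), smul_eq_mul]
    ring
  rw [← iUnion_Ico_natCast_div hM] at hint ⊢
  rw [integral_iUnion (fun _ => measurableSet_Ico) (pairwise_disjoint_Ico_natCast_div hM) hint]
  exact tsum_congr hcell

lemma tendsto_midpointStep (hf : Continuous f) (hu : 0 ≤ u) :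
    Tendsto (fun M => midpointStep f M u) atTop (𝓝 (f u)) := by
  refine (hf.tendsto u).comp ?_
  have h := (tendsto_nat_floor_mul_div_atTop hu).add
    ((tendsto_const_nhds (x := (1 / 2 : ℝ))).div_atTop tendsto_id)
  rw [add_zero] at h
  exact h.congr fun M => add_div _ _ _ |>.symm

end MidpointStep

section GaussianBound

variable {f : ℝ → ℝ} {a C : ℝ}

lemma abs_midpointStep_le (ha : 0 ≤ a) (hf : ∀ v, |f v| ≤ C * exp (-a * v ^ 2)) {M u : ℝ}
    (hM : 1 ≤ M) (hu : 0 ≤ u) :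
    |midpointStep f M u| ≤ C * exp (a / 4) * exp (-a * (u - 1 / 2) ^ 2) := by
  have hC : 0 ≤ C := nonneg_of_mul_nonneg_left ((abs_nonneg _).trans (hf 0)) (exp_pos _)
  set v := (⌊u * M⌋₊ + 1 / 2) / M
  have hv : u - 1 / 2 ≤ v := by
    rw [le_div_iff₀ (by linarith)]
    nlinarith [Nat.lt_floor_add_one (u * M)]
  have hv0 : 0 ≤ v := by positivity
  have hsq : (u - 1 / 2) ^ 2 - 1 / 4 ≤ v ^ 2 := by
    rcases le_total (1 / 2) u with h | h <;> nlinarith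
  calc |midpointStep f M u| ≤ C * exp (-a * v ^ 2) := hf v
    _ ≤ C * exp (a / 4 + -a * (u - 1 / 2) ^ 2) := by
      gcongr
      nlinarith [mul_le_mul_of_nonneg_left hsq ha]
    _ = C * exp (a / 4) * exp (-a * (u - 1 / 2) ^ 2) := by rw [exp_add, mul_assoc]

theorem tendsto_tsum_midpoint_of_gaussian_bound (hf : Continuous f) (ha : 0 < a)
    (hbound : ∀ v, |f v| ≤ C * exp (-a * v ^ 2)) :
    Tendsto (fun M => ∑' n : ℕ, f ((n + 1 / 2) / M) / M) atTop (𝓝 (∫ u in Ioi 0, f u)) := by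
  set B : ℝ → ℝ := fun u => C * exp (a / 4) * exp (-a * (u - 1 / 2) ^ 2)
  have hB : Integrable B := ((integrable_exp_neg_mul_sq ha).comp_sub_right (1 / 2)).const_mul _
  have hmeas (M : ℝ) : AEStronglyMeasurable (midpointStep f M) :=
    (hf.measurable.comp (by fun_prop)).aestronglyMeasurable
  have hdom {M : ℝ} (hM : 1 ≤ M) : ∀ᵐ u ∂volume.restrict (Ici 0), ‖midpointStep f M u‖ ≤ B u :=
    (ae_restrict_iff' measurableSet_Ici).2
      (ae_of_all _ fun _ hu => abs_midpointStep_le ha.le hbound hM hu)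
  have hlim :
      Tendsto (fun M => ∫ u in Ici 0, midpointStep f M u) atTop (𝓝 (∫ u in Ici 0, f u)) :=
    tendsto_integral_filter_of_dominated_convergence B (.of_forall fun M => (hmeas M).restrict)
      ((eventually_ge_atTop 1).mono fun _ hM => hdom hM) hB.integrableOn
      ((ae_restrict_iff' measurableSet_Ici).2 (ae_of_all _ fun _ hu => tendsto_midpointStep hf hu))
  rw [← integral_Ici_eq_integral_Ioi]
  refine hlim.congr' ((eventually_ge_atTop 1).mono fun M hM => ?_)
  exact integral_Ici_midpointStep (by linarith) (hB.integrableOn.mono' (hmeas M).restrict (hdom hM))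

lemma summable_abs_midpoint_of_gaussian_bound (ha : 0 < a)
    (hbound : ∀ v, |f v| ≤ C * exp (-a * v ^ 2)) {M : ℝ} (hM : 0 < M) :
    Summable fun n : ℕ => |f ((n + 1 / 2) / M) / M| := by
  have hC : 0 ≤ C := nonneg_of_mul_nonneg_left ((abs_nonneg _).trans (hbound 0)) (exp_pos _)
  have hr : exp (-(a / M ^ 2)) < 1 := exp_lt_one_iff.2 (neg_neg_of_pos (by positivity))
  refine .of_nonneg_of_le (fun _ => abs_nonneg _) (fun n => ?_)
    ((summable_geometric_of_lt_one (exp_nonneg _) hr).mul_left (C / M))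
  have hsq : (n : ℝ) ≤ (n + 1 / 2) ^ 2 := by nlinarith
  calc |f ((n + 1 / 2) / M) / M| ≤ C * exp (-a * ((n + 1 / 2) / M) ^ 2) / M := by
        rw [abs_div, abs_of_pos hM]
        gcongr
        exact hbound _
    _ ≤ C * exp (n * -(a / M ^ 2)) / M := by
        gcongr C * exp ?_ / M
        rw [div_pow, neg_mul, mul_neg, neg_le_neg_iff, mul_div_assoc', mul_div_assoc']
        gcongr ?_ / _
        rw [mul_comm]
        exact mul_le_mul_of_nonneg_left hsq ha.le
    _ = C / M * exp (-(a / M ^ 2)) ^ n := by rw [exp_nat_mul]; ring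

end GaussianBound

theorem stmt_12 (t : ℝ) (ht : 0 < t) (x y : ℝ) :
    (∀ M : ℝ, 0 < M → Summable fun n : ℕ =>
      |(2 / M) * Real.cos (((n : ℝ) + 1 - 1 / 2) * Real.pi * x / M) *
        Real.cos (((n : ℝ) + 1 - 1 / 2) * Real.pi * y / M) *
        Real.exp (-((n : ℝ) + 1 - 1 / 2) ^ 2 * Real.pi ^ 2 * t / (2 * M ^ 2))|) ∧
    Filter.Tendsto
      (fun M : ℝ =>
        ∑' n : ℕ, (2 / M) * Real.cos (((n : ℝ) + 1 - 1 / 2) * Real.pi * x / M) *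
          Real.cos (((n : ℝ) + 1 - 1 / 2) * Real.pi * y / M) *
          Real.exp (-((n : ℝ) + 1 - 1 / 2) ^ 2 * Real.pi ^ 2 * t / (2 * M ^ 2)))
      Filter.atTop
      (nhds ((1 / Real.sqrt (2 * Real.pi * t)) *
        (Real.exp (-(x - y) ^ 2 / (2 * t)) + Real.exp (-(x + y) ^ 2 / (2 * t))))) := by
  set a := π ^ 2 * t / 2
  have ha : 0 < a := by positivity
  set f : ℝ → ℝ := fun u => 2 * cos (π * x * u) * cos (π * y * u) * exp (-a * u ^ 2)
  have hterm (M : ℝ) (n : ℕ) :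
      2 / M * cos ((n + 1 - 1 / 2) * π * x / M) * cos ((n + 1 - 1 / 2) * π * y / M) *
        exp (-(n + 1 - 1 / 2) ^ 2 * π ^ 2 * t / (2 * M ^ 2)) = f ((n + 1 / 2) / M) / M := by
    have harg (z : ℝ) : (n + 1 - 1 / 2) * π * z / M = π * z * ((n + 1 / 2) / M) := by ring
    have hexp : -(n + 1 - 1 / 2) ^ 2 * π ^ 2 * t / (2 * M ^ 2) = -a * ((n + 1 / 2) / M) ^ 2 := by
      ring
    rw [harg, harg, hexp]
    ring
  have hbound (v : ℝ) : |f v| ≤ 2 * exp (-a * v ^ 2) := by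
    simp only [f, abs_mul, abs_two, abs_exp]
    gcongr
    calc 2 * |cos (π * x * v)| * |cos (π * y * v)| ≤ 2 * 1 * 1 := by
          gcongr <;> exact abs_cos_le_one _
      _ = 2 := by ring
  refine ⟨fun M hM => ?_, ?_⟩
  · simpa only [hterm] using summable_abs_midpoint_of_gaussian_bound ha hbound hM
  · simp only [hterm]
    rw [← integral_Ioi_two_mul_cos_mul_cos_mul_exp_eq_heatKernel ht x y]
    exact tendsto_tsum_midpoint_of_gaussian_bound (by fun_prop) ha hbound
end

section
/- Let N ≥ 1, let h : ℕ → ℝ and A, B : {1,…,N} × ℕ → ℝ be functions such that Σ_{m∈ℕ} |h(m)·A(i,m)·B(j,m)| < ∞ for all 1 ≤ i, j ≤ N. Then Σ_{n∈ℕ^N} ( ∏_{s=1}^N h(n_s) ) · det_{1≤i,j≤N}[ A(i, n_j) ] · det_{1≤i,j≤N}[ B(i, n_j) ] = N! · det_{1≤i,j≤N}[ Σ_{m∈ℕ} h(m) · A(i,m) · B(j,m) ], where the multi-indexed sum on the left is absolutely summable and each entry series on the right converges absolutely. -/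
open Finset Equiv

lemma aux_pi_tsum : ∀ (N : ℕ) (f : Fin N → ℕ → ℝ),
    (∀ i, Summable fun m => |f i m|) →
    Summable (fun n : Fin N → ℕ => ∏ i, |f i (n i)|) ∧
    (∑' n : Fin N → ℕ, ∏ i, f i (n i)) = ∏ i, ∑' m, f i m := by
  intro N
  induction N with
  | zero =>
    intro f hf
    haveI : Unique (Fin 0 → ℕ) := ⟨⟨fun i => i.elim0⟩, fun g => funext fun i => i.elim0⟩
    constructor
    · exact .of_finite
    · simp [tsum_eq_single (default : Fin 0 → ℕ) (fun b hb => absurd (Subsingleton.elim b default) hb)]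
  | succ N ih =>
    intro f hf
    obtain ⟨hS, hT⟩ := ih (fun i => f i.succ) (fun i => hf i.succ)
    set e : ℕ × (Fin N → ℕ) ≃ (Fin (N + 1) → ℕ) := Fin.consEquiv (fun _ => ℕ) with he
    have hcomp : ∀ (z : ℕ × (Fin N → ℕ)) (g : Fin (N+1) → ℕ → ℝ),
        (∏ i, g i (e z i)) = g 0 z.1 * ∏ i : Fin N, g i.succ (z.2 i) := by
      intro z g
      rw [Fin.prod_univ_succ]
      simp [he, Fin.consEquiv]
    have habs : Summable fun z : ℕ × (Fin N → ℕ) => |f 0 z.1| * ∏ i : Fin N, |f i.succ (z.2 i)| :=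
      Summable.mul_of_nonneg (f := fun m => |f 0 m|)
        (g := fun p : Fin N → ℕ => ∏ i : Fin N, |f i.succ (p i)|)
        (hf 0) hS (fun x => abs_nonneg _)
        (fun x => Finset.prod_nonneg fun i _ => abs_nonneg _)
    have hSN : Summable fun p : Fin N → ℕ => ∏ i : Fin N, f i.succ (p i) :=
      Summable.of_abs (hS.congr (fun p => (Finset.abs_prod _ _).symm))
    constructor
    · rw [← e.summable_iff]
      have : ((fun n : Fin (N+1) → ℕ => ∏ i, |f i (n i)|) ∘ e)
          = fun z => |f 0 z.1| * ∏ i : Fin N, |f i.succ (z.2 i)| := by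
        funext z
        exact hcomp z (fun i m => |f i m|)
      rw [this]
      exact habs
    · rw [← e.tsum_eq]
      have : (fun z : ℕ × (Fin N → ℕ) => ∏ i, f i (e z i))
          = fun z => f 0 z.1 * ∏ i : Fin N, f i.succ (z.2 i) := by
        funext z; exact hcomp z f
      rw [show (∑' z : ℕ × (Fin N → ℕ), ∏ i, f i (e z i))
            = ∑' z : ℕ × (Fin N → ℕ), f 0 z.1 * ∏ i : Fin N, f i.succ (z.2 i) from by rw [this],
          Fin.prod_univ_succ, ← hT]
      refine (Summable.tsum_mul_tsum ((hf 0).of_abs) hSN ?_).symm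
      refine Summable.of_abs (habs.congr fun z => ?_)
      rw [abs_mul, Finset.abs_prod]

open Finset Equiv

lemma aux_sign_cast (M : ℕ) (σ : Equiv.Perm (Fin M)) :
    |((Equiv.Perm.sign σ : ℤ) : ℝ)| = 1 := by
  rcases Int.units_eq_one_or (Equiv.Perm.sign σ) with h | h <;> simp [h]

lemma aux_expand (N : ℕ) (h : ℕ → ℝ) (A B : Fin N → ℕ → ℝ) (n : Fin N → ℕ) :
    (∏ s : Fin N, h (n s)) * ((Matrix.of fun i j : Fin N => A i (n j)).det *
        (Matrix.of fun i j : Fin N => B i (n j)).det)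
    = ∑ σ : Equiv.Perm (Fin N), ∑ τ : Equiv.Perm (Fin N),
        ((Equiv.Perm.sign σ : ℤ) : ℝ) * ((Equiv.Perm.sign τ : ℤ) : ℝ) *
          ∏ j : Fin N, (h (n j) * A (σ j) (n j) * B (τ j) (n j)) := by
  rw [Matrix.det_apply', Matrix.det_apply', Finset.sum_mul_sum, Finset.mul_sum]
  refine Finset.sum_congr rfl fun σ _ => ?_
  rw [Finset.mul_sum]
  refine Finset.sum_congr rfl fun τ _ => ?_
  simp only [Matrix.of_apply]
  rw [show (∏ j : Fin N, (h (n j) * A (σ j) (n j) * B (τ j) (n j)))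
      = (∏ j : Fin N, h (n j)) * (∏ j : Fin N, A (σ j) (n j)) * ∏ j : Fin N, B (τ j) (n j) from by
    rw [← Finset.prod_mul_distrib, ← Finset.prod_mul_distrib]]
  ring

lemma aux_comb (N : ℕ) (C : Fin N → Fin N → ℝ) :
    (∑ σ : Equiv.Perm (Fin N), ∑ τ : Equiv.Perm (Fin N),
        ((Equiv.Perm.sign σ : ℤ) : ℝ) * ((Equiv.Perm.sign τ : ℤ) : ℝ) *
          ∏ j : Fin N, C (σ j) (τ j))
    = (Nat.factorial N : ℝ) * (Matrix.of C).det := by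
  rw [Finset.sum_comm]
  have key : ∀ τ : Equiv.Perm (Fin N),
      (∑ σ : Equiv.Perm (Fin N),
        ((Equiv.Perm.sign σ : ℤ) : ℝ) * ((Equiv.Perm.sign τ : ℤ) : ℝ) *
          ∏ j : Fin N, C (σ j) (τ j)) = (Matrix.of C).det := by
    intro τ
    rw [← Equiv.sum_comp (Equiv.mulRight τ)
      (fun σ => ((Equiv.Perm.sign σ : ℤ) : ℝ) * ((Equiv.Perm.sign τ : ℤ) : ℝ) *
        ∏ j : Fin N, C (σ j) (τ j))]
    rw [Matrix.det_apply']
    refine Finset.sum_congr rfl fun π _ => ?_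
    have h1 : ∀ j, (Equiv.mulRight τ π) j = π (τ j) := fun j => rfl
    have h2 : (∏ j : Fin N, C ((Equiv.mulRight τ π) j) (τ j)) = ∏ k : Fin N, C (π k) k := by
      simp only [h1]
      exact Equiv.prod_comp τ (fun k => C (π k) k)
    rw [h2]
    have h3 : ((Equiv.Perm.sign (Equiv.mulRight τ π) : ℤ) : ℝ)
        = ((Equiv.Perm.sign π : ℤ) : ℝ) * ((Equiv.Perm.sign τ : ℤ) : ℝ) := by
      have : Equiv.mulRight τ π = π * τ := rfl
      rw [this, Equiv.Perm.sign_mul]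
      push_cast
      ring
    rw [h3]
    have h4 : ((Equiv.Perm.sign τ : ℤ) : ℝ) * ((Equiv.Perm.sign τ : ℤ) : ℝ) = 1 := by
      rcases Int.units_eq_one_or (Equiv.Perm.sign τ) with h | h <;> simp [h]
    simp only [Matrix.of_apply]
    linear_combination (((Equiv.Perm.sign π : ℤ) : ℝ) * ∏ k : Fin N, C (π k) k) * h4
  rw [Finset.sum_congr rfl (fun τ _ => key τ), Finset.sum_const, Finset.card_univ,
    Fintype.card_perm, Fintype.card_fin, nsmul_eq_mul]

theorem stmt_17 (N : ℕ) (hN : 1 ≤ N) (h : ℕ → ℝ) (A B : Fin N → ℕ → ℝ)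
    (hAB : ∀ i j : Fin N, Summable fun m : ℕ => |h m * A i m * B j m|) :
    (Summable fun n : Fin N → ℕ =>
      |(∏ s : Fin N, h (n s)) * ((Matrix.of fun i j : Fin N => A i (n j)).det *
        (Matrix.of fun i j : Fin N => B i (n j)).det)|) ∧
    (∑' n : Fin N → ℕ, (∏ s : Fin N, h (n s)) *
        ((Matrix.of fun i j : Fin N => A i (n j)).det *
          (Matrix.of fun i j : Fin N => B i (n j)).det))
      = (Nat.factorial N : ℝ) *
        (Matrix.of fun i j : Fin N => ∑' m : ℕ, h m * A i m * B j m).det := by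
  classical
  have key : ∀ σ τ : Equiv.Perm (Fin N),
      Summable (fun n : Fin N → ℕ => ∏ j : Fin N, |h (n j) * A (σ j) (n j) * B (τ j) (n j)|) ∧
      (∑' n : Fin N → ℕ, ∏ j : Fin N, (h (n j) * A (σ j) (n j) * B (τ j) (n j)))
        = ∏ j : Fin N, ∑' m : ℕ, h m * A (σ j) m * B (τ j) m :=
    fun σ τ => aux_pi_tsum N (fun j m => h m * A (σ j) m * B (τ j) m) (fun j => hAB (σ j) (τ j))
  have habs1 : ∀ (σ τ : Equiv.Perm (Fin N)) (n : Fin N → ℕ),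
      |((Equiv.Perm.sign σ : ℤ) : ℝ) * ((Equiv.Perm.sign τ : ℤ) : ℝ) *
        ∏ j : Fin N, (h (n j) * A (σ j) (n j) * B (τ j) (n j))|
      = ∏ j : Fin N, |h (n j) * A (σ j) (n j) * B (τ j) (n j)| := by
    intro σ τ n
    rw [abs_mul, abs_mul, aux_sign_cast, aux_sign_cast, one_mul, one_mul, Finset.abs_prod]
  have hterm : ∀ σ τ : Equiv.Perm (Fin N),
      Summable (fun n : Fin N → ℕ =>
        ((Equiv.Perm.sign σ : ℤ) : ℝ) * ((Equiv.Perm.sign τ : ℤ) : ℝ) *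
          ∏ j : Fin N, (h (n j) * A (σ j) (n j) * B (τ j) (n j))) := by
    intro σ τ
    exact Summable.of_abs ((key σ τ).1.congr fun n => (habs1 σ τ n).symm)
  constructor
  · have hbound : Summable fun n : Fin N → ℕ =>
        ∑ σ : Equiv.Perm (Fin N), ∑ τ : Equiv.Perm (Fin N),
          ∏ j : Fin N, |h (n j) * A (σ j) (n j) * B (τ j) (n j)| := by
      apply summable_sum
      intro σ _
      apply summable_sum
      intro τ _
      exact (key σ τ).1
    refine Summable.of_nonneg_of_le (fun n => abs_nonneg _) (fun n => ?_) hbound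
    rw [aux_expand N h A B n]
    calc |∑ σ : Equiv.Perm (Fin N), ∑ τ : Equiv.Perm (Fin N),
            ((Equiv.Perm.sign σ : ℤ) : ℝ) * ((Equiv.Perm.sign τ : ℤ) : ℝ) *
              ∏ j : Fin N, (h (n j) * A (σ j) (n j) * B (τ j) (n j))|
        ≤ ∑ σ : Equiv.Perm (Fin N), |∑ τ : Equiv.Perm (Fin N),
            ((Equiv.Perm.sign σ : ℤ) : ℝ) * ((Equiv.Perm.sign τ : ℤ) : ℝ) *
              ∏ j : Fin N, (h (n j) * A (σ j) (n j) * B (τ j) (n j))| :=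
          Finset.abs_sum_le_sum_abs _ _
      _ ≤ ∑ σ : Equiv.Perm (Fin N), ∑ τ : Equiv.Perm (Fin N),
            |((Equiv.Perm.sign σ : ℤ) : ℝ) * ((Equiv.Perm.sign τ : ℤ) : ℝ) *
              ∏ j : Fin N, (h (n j) * A (σ j) (n j) * B (τ j) (n j))| :=
          Finset.sum_le_sum fun σ _ => Finset.abs_sum_le_sum_abs _ _
      _ = ∑ σ : Equiv.Perm (Fin N), ∑ τ : Equiv.Perm (Fin N),
            ∏ j : Fin N, |h (n j) * A (σ j) (n j) * B (τ j) (n j)| :=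
          Finset.sum_congr rfl fun σ _ => Finset.sum_congr rfl fun τ _ => habs1 σ τ n
  · calc (∑' n : Fin N → ℕ, (∏ s : Fin N, h (n s)) *
          ((Matrix.of fun i j : Fin N => A i (n j)).det *
            (Matrix.of fun i j : Fin N => B i (n j)).det))
        = ∑' n : Fin N → ℕ, ∑ σ : Equiv.Perm (Fin N), ∑ τ : Equiv.Perm (Fin N),
            ((Equiv.Perm.sign σ : ℤ) : ℝ) * ((Equiv.Perm.sign τ : ℤ) : ℝ) *
              ∏ j : Fin N, (h (n j) * A (σ j) (n j) * B (τ j) (n j)) :=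
          tsum_congr (aux_expand N h A B)
      _ = ∑ σ : Equiv.Perm (Fin N), ∑' n : Fin N → ℕ, ∑ τ : Equiv.Perm (Fin N),
            ((Equiv.Perm.sign σ : ℤ) : ℝ) * ((Equiv.Perm.sign τ : ℤ) : ℝ) *
              ∏ j : Fin N, (h (n j) * A (σ j) (n j) * B (τ j) (n j)) :=
          Summable.tsum_finsetSum fun σ _ => summable_sum fun τ _ => hterm σ τ
      _ = ∑ σ : Equiv.Perm (Fin N), ∑ τ : Equiv.Perm (Fin N), ∑' n : Fin N → ℕ,
            ((Equiv.Perm.sign σ : ℤ) : ℝ) * ((Equiv.Perm.sign τ : ℤ) : ℝ) *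
              ∏ j : Fin N, (h (n j) * A (σ j) (n j) * B (τ j) (n j)) :=
          Finset.sum_congr rfl fun σ _ => Summable.tsum_finsetSum fun τ _ => hterm σ τ
      _ = ∑ σ : Equiv.Perm (Fin N), ∑ τ : Equiv.Perm (Fin N),
            ((Equiv.Perm.sign σ : ℤ) : ℝ) * ((Equiv.Perm.sign τ : ℤ) : ℝ) *
              ∏ j : Fin N, (∑' m : ℕ, h m * A (σ j) m * B (τ j) m) := by
          refine Finset.sum_congr rfl fun σ _ => Finset.sum_congr rfl fun τ _ => ?_
          rw [tsum_mul_left, (key σ τ).2]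
      _ = (Nat.factorial N : ℝ) *
            (Matrix.of fun i j : Fin N => ∑' m : ℕ, h m * A i m * B j m).det :=
          aux_comb N (fun i j => ∑' m : ℕ, h m * A i m * B j m)
end
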